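/- arXiv:1801.10073 — 7 statements merged into one kernel-verified Lean document; each statement's English description precedes it below -/
import Mathlib

section
/- Let (J_R)_{R ∈ I_{n,q}} be independent, identically distributed real random variables with E[J_R] = 0, E[J_R²] = 1 and E[|J_R|^k] < ∞ for every k. Then C(n,q)^{−k/2} · Σ_{(R_1, …, R_k) ∈ I_{n,q}^k ∖ P_2(I_{n,q}^k)} |E[J_{R_1} ⋯ J_{R_k}]| is equal to 0 if k = 1 or k = 2; it is at most c_k · C(n,q)^{−1/2} if k ≥ 3 is odd; and it is at most c_k · C(n,q)^{−1} if k ≥ 4 is even, where c_k is a constant depending only on k and on the common distribution of the J_R (not on n or q). -/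
/-!
By independence, `E[J_{R_1} ⋯ J_{R_k}]` is the product, over the distinct entries `A` of the tuple,
of the moments `E[J^{m_A}]`, where `m_A` is the multiplicity of `A`. As the mean vanishes, a
non-zero term has every `m_A ≥ 2`, and off `P_2` some `m_A ≥ 3`, so the tuple has at most
`D = ⌊(k-1)/2⌋` distinct entries. There are at most `D^k C(n,q)^D` such tuples, each contributing
at most a constant depending on the first `k` moments, and `C(n,q)^(D - k/2)` is `C(n,q)^(-1/2)`
for odd `k` and `C(n,q)^(-1)` for even `k`. For `k ≤ 2` we get `D = 0`: no tuple contributes.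
-/

open MeasureTheory ProbabilityTheory BigOperators
open scoped Classical

/-- Tuples in which every entry appears exactly twice. -/
def PairTuple {X : Type*} {k : ℕ} (R : Fin k → X) : Prop :=
  ∀ i, (Finset.univ.filter fun j => R j = R i).card = 2

/-- `C(n,q)^{-k/2} ⬝ Σ_{(R_1,…,R_k) ∉ P_2} |E[J_{R_1} ⋯ J_{R_k}]|`. -/
noncomputable def offPairSum (n q k : ℕ) {Ω : Type} [MeasurableSpace Ω]
    (P : Measure Ω) (J : {A : Finset (Fin n) // A.card = q} → Ω → ℝ) : ℝ :=
  (n.choose q : ℝ) ^ (-(k : ℝ) / 2) *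
    ∑ R ∈ Finset.univ.filter
        (fun R : Fin k → {A : Finset (Fin n) // A.card = q} => ¬ PairTuple R),
      |∫ ω, ∏ i, J (R i) ω ∂P|

open Finset

section Tuple

variable {X : Type*} {k : ℕ}

noncomputable def tupleCount (R : Fin k → X) (A : X) : ℕ := #{i | R i = A}

lemma tupleCount_le (R : Fin k → X) (A : X) : tupleCount R A ≤ k :=
  (card_filter_le _ _).trans_eq (card_fin k)

lemma tupleCount_apply_pos (R : Fin k → X) (i : Fin k) : 0 < tupleCount R (R i) :=
  card_pos.mpr ⟨i, by simp⟩

lemma sum_tupleCount (R : Fin k → X) : ∑ A ∈ univ.image R, tupleCount R A = k :=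
  (card_eq_sum_card_image R univ).symm.trans (card_fin k)

lemma two_mul_card_image_lt (R : Fin k → X) (htwo : ∀ i, 2 ≤ tupleCount R (R i))
    (hR : ¬ PairTuple R) : 2 * #(univ.image R) < k := by
  obtain ⟨i, hi⟩ : ∃ i, tupleCount R (R i) ≠ 2 := by simpa [PairTuple, tupleCount] using hR
  have hcount : ∀ A ∈ univ.image R, 2 + (if A = R i then 1 else 0) ≤ tupleCount R A := by
    rintro A hA
    obtain ⟨j, -, rfl⟩ := mem_image.mp hA
    split_ifs with h
    · rw [h]
      exact (htwo i).lt_of_ne' hi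
    · exact htwo j
  calc 2 * #(univ.image R) < ∑ A ∈ univ.image R, (2 + if A = R i then 1 else 0) := by
        simp [sum_add_distrib, mul_comm]
    _ ≤ k := (sum_le_sum hcount).trans_eq (sum_tupleCount R)

end Tuple

lemma card_filter_card_image_le (S : Type*) [Fintype S] [Nonempty S] (k D : ℕ) :
    #({R | #(univ.image R) ≤ D} : Finset (Fin k → S)) ≤ D ^ k * Fintype.card S ^ D := by
  have hfactor : ({R | #(univ.image R) ≤ D} : Finset (Fin k → S))
      ⊆ univ.image fun p : (Fin k → Fin D) × (Fin D → S) => p.2 ∘ p.1 := by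
    intro R hR
    have hD : Fintype.card (univ.image R) ≤ Fintype.card (Fin D) := by
      rw [Fintype.card_coe, Fintype.card_fin]
      exact (mem_filter.mp hR).2
    obtain ⟨e⟩ := Function.Embedding.nonempty_of_card_le hD
    refine mem_image.mpr ⟨(fun i => e ⟨R i, by simp⟩,
      Function.extend e Subtype.val fun _ => Classical.arbitrary S), mem_univ _, ?_⟩
    funext i
    exact e.injective.extend_apply Subtype.val (fun _ => Classical.arbitrary S) ⟨R i, by simp⟩
  calc _ ≤ _ := card_le_card hfactor
    _ ≤ _ := card_image_le
    _ = D ^ k * Fintype.card S ^ D := by simp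

noncomputable def momentBound (μ : Measure ℝ) (k : ℕ) : ℝ :=
  1 + ∑ m ∈ range (k + 1), |∫ x, x ^ m ∂μ|

lemma one_le_momentBound (μ : Measure ℝ) (k : ℕ) : 1 ≤ momentBound μ k :=
  le_add_of_nonneg_right (sum_nonneg fun _ _ => abs_nonneg _)

lemma abs_moment_le_momentBound (μ : Measure ℝ) {m k : ℕ} (hm : m ≤ k) :
    |∫ x, x ^ m ∂μ| ≤ momentBound μ k :=
  (single_le_sum (f := fun m => |∫ x, x ^ m ∂μ|) (fun _ _ => abs_nonneg _)
    (mem_range.mpr (Nat.lt_succ_of_le hm))).trans (le_add_of_nonneg_left zero_le_one)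

section IndependentCopies

variable {S Ω : Type*} [MeasurableSpace Ω] {P : Measure Ω} {μ : Measure ℝ} {J : S → Ω → ℝ}
  {k : ℕ}

lemma integral_prod_comp_eq_prod_moment (hmeas : ∀ A, Measurable (J A))
    (hmap : ∀ A, P.map (J A) = μ) (hind : iIndepFun J P) (R : Fin k → S) :
    ∫ ω, ∏ i, J (R i) ω ∂P = ∏ A ∈ univ.image R, ∫ x, x ^ tupleCount R A ∂μ := by
  set T := univ.image R
  have hindT := hind.precomp (g := ((↑) : T → S)) Subtype.val_injective
  calc ∫ ω, ∏ i, J (R i) ω ∂P = ∫ ω, ∏ A : T, J A ω ^ tupleCount R A ∂P := by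
        refine integral_congr_ae (.of_forall fun ω => ?_)
        dsimp only
        rw [prod_coe_sort T fun A => J A ω ^ tupleCount R A]
        exact prod_comp (fun A => J A ω) R
    _ = ∏ A : T, ∫ ω, J A ω ^ tupleCount R A ∂P :=
        hindT.integral_fun_prod_comp (X := fun A : T => J A) (f := fun A x => x ^ tupleCount R A)
          (fun A => (hmeas A).aemeasurable) fun A => (continuous_pow _).aestronglyMeasurable
    _ = ∏ A ∈ T, ∫ x, x ^ tupleCount R A ∂μ := by
        rw [← prod_coe_sort T]
        refine prod_congr rfl fun A _ => ?_
        rw [← hmap A, integral_map (hmeas A).aemeasurable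
          (continuous_pow _).aestronglyMeasurable]

variable (hmeas : ∀ A, Measurable (J A)) (hmap : ∀ A, P.map (J A) = μ) (hind : iIndepFun J P)
include hmeas hmap hind

lemma integral_prod_comp_eq_zero_of_tupleCount_eq_one (hmean : ∫ x, x ∂μ = 0)
    {R : Fin k → S} {i : Fin k} (hi : tupleCount R (R i) = 1) :
    ∫ ω, ∏ i, J (R i) ω ∂P = 0 := by
  rw [integral_prod_comp_eq_prod_moment hmeas hmap hind]
  exact prod_eq_zero (mem_image_of_mem R (mem_univ i)) (by simpa [hi] using hmean)

lemma abs_integral_prod_comp_le (R : Fin k → S) :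
    |∫ ω, ∏ i, J (R i) ω ∂P| ≤ momentBound μ k ^ k := by
  rw [integral_prod_comp_eq_prod_moment hmeas hmap hind, abs_prod]
  calc ∏ A ∈ univ.image R, |∫ x, x ^ tupleCount R A ∂μ|
      ≤ ∏ _A ∈ univ.image R, momentBound μ k :=
        prod_le_prod (fun _ _ => abs_nonneg _)
          fun A _ => abs_moment_le_momentBound μ (tupleCount_le R A)
    _ = momentBound μ k ^ #(univ.image R) := prod_const _
    _ ≤ momentBound μ k ^ k :=
        pow_le_pow_right₀ (one_le_momentBound μ k) (card_image_le.trans_eq (card_fin k))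

lemma two_mul_card_image_lt_of_integral_ne_zero (hmean : ∫ x, x ∂μ = 0) {R : Fin k → S}
    (hR : ¬ PairTuple R) (hne : ∫ ω, ∏ i, J (R i) ω ∂P ≠ 0) : 2 * #(univ.image R) < k := by
  refine two_mul_card_image_lt R (fun i => ?_) hR
  have hpos := tupleCount_apply_pos R i
  have hne_one : tupleCount R (R i) ≠ 1 := fun hi =>
    hne (integral_prod_comp_eq_zero_of_tupleCount_eq_one hmeas hmap hind hmean hi)
  omega

lemma sum_abs_integral_prod_comp_le [Fintype S] [Nonempty S] (hmean : ∫ x, x ∂μ = 0) :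
    ∑ R ∈ ({R | ¬ PairTuple R} : Finset (Fin k → S)), |∫ ω, ∏ i, J (R i) ω ∂P|
      ≤ ((k - 1) / 2 : ℕ) ^ k * Fintype.card S ^ ((k - 1) / 2) * momentBound μ k ^ k := by
  set small : Finset (Fin k → S) := {R | #(univ.image R) ≤ (k - 1) / 2}
  have hsupport : ({R | ¬ PairTuple R} : Finset (Fin k → S)).filter
      (fun R => |∫ ω, ∏ i, J (R i) ω ∂P| ≠ 0) ⊆ small := by
    intro R hR
    simp only [mem_filter, mem_univ, true_and, abs_ne_zero] at hR
    have := two_mul_card_image_lt_of_integral_ne_zero hmeas hmap hind hmean hR.1 hR.2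
    simp only [small, mem_filter, mem_univ, true_and]
    omega
  calc _ = ∑ R ∈ ({R | ¬ PairTuple R} : Finset (Fin k → S)).filter
          (fun R => |∫ ω, ∏ i, J (R i) ω ∂P| ≠ 0), |∫ ω, ∏ i, J (R i) ω ∂P| :=
        (sum_filter_ne_zero _).symm
    _ ≤ ∑ R ∈ small, |∫ ω, ∏ i, J (R i) ω ∂P| :=
        sum_le_sum_of_subset_of_nonneg hsupport fun _ _ _ => abs_nonneg _
    _ ≤ #small • momentBound μ k ^ k :=
        sum_le_card_nsmul _ _ _ fun R _ => abs_integral_prod_comp_le hmeas hmap hind R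
    _ ≤ _ := by
        rw [nsmul_eq_mul]
        gcongr ?_ * _
        · exact pow_nonneg (zero_le_one.trans (one_le_momentBound μ k)) k
        exact_mod_cast card_filter_card_image_le S k ((k - 1) / 2)

end IndependentCopies

lemma offPairSum_nonneg (n q k : ℕ) {Ω : Type} [MeasurableSpace Ω] (P : Measure Ω)
    (J : {A : Finset (Fin n) // A.card = q} → Ω → ℝ) : 0 ≤ offPairSum n q k P J := by
  unfold offPairSum
  positivity

lemma offPairSum_le {μ : Measure ℝ} (hmean : ∫ x, x ∂μ = 0) {n q k : ℕ} (hqn : q ≤ n)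
    {Ω : Type} [MeasurableSpace Ω] {P : Measure Ω} {J : {A : Finset (Fin n) // A.card = q} → Ω → ℝ}
    (hmeas : ∀ A, Measurable (J A)) (hmap : ∀ A, P.map (J A) = μ) (hind : iIndepFun J P) :
    offPairSum n q k P J ≤ ((k - 1) / 2 : ℕ) ^ k * momentBound μ k ^ k *
      (n.choose q : ℝ) ^ ((((k - 1) / 2 : ℕ) : ℝ) - k / 2) := by
  obtain ⟨A, -, hA⟩ := exists_subset_card_eq (s := (univ : Finset (Fin n))) (by simpa using hqn)
  have : Nonempty {A : Finset (Fin n) // A.card = q} := ⟨⟨A, hA⟩⟩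
  have hN : 0 < (n.choose q : ℝ) := Nat.cast_pos.mpr (Nat.choose_pos hqn)
  have hcard : Fintype.card {A : Finset (Fin n) // A.card = q} = n.choose q := by simp
  have hsum := sum_abs_integral_prod_comp_le (k := k) hmeas hmap hind hmean
  rw [hcard] at hsum
  calc offPairSum n q k P J
      ≤ (n.choose q : ℝ) ^ (-(k : ℝ) / 2) * (((k - 1) / 2 : ℕ) ^ k *
          (n.choose q : ℝ) ^ ((k - 1) / 2) * momentBound μ k ^ k) :=
        mul_le_mul_of_nonneg_left hsum (Real.rpow_nonneg hN.le _)
    _ = _ := by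
        rw [show (((k - 1) / 2 : ℕ) : ℝ) - k / 2 = ((k - 1) / 2 : ℕ) + -(k : ℝ) / 2 by ring,
          Real.rpow_add hN, Real.rpow_natCast]
        ring

theorem stmt4_general (μ : Measure ℝ)
    (hmean : ∫ x, x ∂μ = 0)
    (k : ℕ) :
    ∃ C : ℝ, ∀ (n q : ℕ), 1 ≤ q → q ≤ n →
      ∀ (Ω : Type) (mΩ : MeasurableSpace Ω) (P : Measure Ω), IsProbabilityMeasure P →
      ∀ J : {A : Finset (Fin n) // A.card = q} → Ω → ℝ,
        (∀ R, Measurable (J R)) →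
        (∀ R, Measure.map (J R) P = μ) →
        iIndepFun J P →
        (k = 1 ∨ k = 2 → offPairSum n q k P J = 0) ∧
        (Odd k → 3 ≤ k →
          offPairSum n q k P J ≤ C * (n.choose q : ℝ) ^ (-(1 : ℝ) / 2)) ∧
        (Even k → 4 ≤ k →
          offPairSum n q k P J ≤ C * ((n.choose q : ℝ))⁻¹) := by
  refine ⟨((k - 1) / 2 : ℕ) ^ k * momentBound μ k ^ k,
    fun n q _ hqn Ω _ P _ J hmeas hmap hind => ⟨fun hk => ?_, fun hodd _ => ?_, fun heven hk => ?_⟩⟩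
  all_goals have hbound := offPairSum_le (k := k) hmean hqn hmeas hmap hind
  · rw [show (k - 1) / 2 = 0 by omega, Nat.cast_zero, zero_pow (by omega), zero_mul,
      zero_mul] at hbound
    exact hbound.antisymm (offPairSum_nonneg n q k P J)
  · obtain ⟨d, rfl⟩ := hodd
    convert hbound using 3
    rw [show (2 * d + 1 - 1) / 2 = d by omega]
    push_cast
    ring
  · obtain ⟨d, rfl⟩ := heven
    rwa [show (((d + d - 1) / 2 : ℕ) : ℝ) - ((d + d : ℕ) : ℝ) / 2 = -1 by
        rw [show (d + d - 1) / 2 = d - 1 by omega, Nat.cast_sub (by omega)]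
        push_cast
        ring,
      Real.rpow_neg_one] at hbound

theorem stmt4 (μ : Measure ℝ) [IsProbabilityMeasure μ]
    (hmean : ∫ x, x ∂μ = 0) (hvar : ∫ x, x ^ 2 ∂μ = 1)
    (hmom : ∀ k : ℕ, Integrable (fun x => |x| ^ k) μ)
    (k : ℕ) (hk : 1 ≤ k) :
    ∃ C : ℝ, ∀ (n q : ℕ), 1 ≤ q → q ≤ n →
      ∀ (Ω : Type) (mΩ : MeasurableSpace Ω) (P : Measure Ω), IsProbabilityMeasure P →
      ∀ J : {A : Finset (Fin n) // A.card = q} → Ω → ℝ,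
        (∀ R, Measurable (J R)) →
        (∀ R, Measure.map (J R) P = μ) →
        iIndepFun J P →
        (k = 1 ∨ k = 2 → offPairSum n q k P J = 0) ∧
        (Odd k → 3 ≤ k →
          offPairSum n q k P J ≤ C * (n.choose q : ℝ) ^ (-(1 : ℝ) / 2)) ∧
        (Even k → 4 ≤ k →
          offPairSum n q k P J ≤ C * ((n.choose q : ℝ))⁻¹) :=
  stmt4_general μ hmean k
end

section
/- Let k be a positive even integer and q a positive integer with k·q/2 ≤ n. Define A_{n,k} = {(R_1, …, R_k) ∈ P_2(I_{n,q}^k) : R_i ∩ R_j = ∅ whenever R_i ≠ R_j} and B_{n,k} = P_2(I_{n,q}^k) ∖ A_{n,k}. Then (k−1)!! · (1 − k²q²/(4n)) · C(n,q)^{k/2} ≤ |A_{n,k}| ≤ (k−1)!! · C(n,q)^{k/2}, and |B_{n,k}| ≤ (k²q²/(4n)) · (k−1)!! · C(n,q)^{k/2}. -/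
open BigOperators
open scoped Classical

/-!
A tuple in which every entry appears exactly twice is determined by the fixed-point-free
involution `σ` of `Fin k` pairing its equal entries together with its values on the smaller
point of each pair. There are `(k - 1)‼` such involutions and at most `C(n, q) ^ (k / 2)` choices
of values, which bounds `|P_2|` and hence `|A|`. The tuples in `A` are exactly those whose
values form a tuple of pairwise disjoint `q`-sets, and `|B| = |P_2| - |A|`. A union bound over
ordered pairs of positions and points of `{1, …, n}` shows that at most
`(k / 2) ^ 2 q ^ 2 / n · C(n, q) ^ (k / 2)` value tuples fail to be pairwise disjoint, because
`n · C(n - 1, q - 1) = q · C(n, q)`.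
-/

open Finset Nat

section FixedPointFreeInvolution

variable {α : Type*} [Fintype α] [DecidableEq α]

def IsFixedPointFreeInvolution (σ : α → α) : Prop :=
  Function.Involutive σ ∧ ∀ x, σ x ≠ x

def swapAndExtend (x₀ y : α) (τ : ({x₀, y}ᶜ : Finset α) → ({x₀, y}ᶜ : Finset α))
    (x : α) : α :=
  if hx : x ∈ ({x₀, y}ᶜ : Finset α) then τ ⟨x, hx⟩ else if x = x₀ then y else x₀

section swapAndExtend

variable {x₀ y : α} {τ : ({x₀, y}ᶜ : Finset α) → ({x₀, y}ᶜ : Finset α)}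

lemma swapAndExtend_of_mem {x : α} (hx : x ∈ ({x₀, y}ᶜ : Finset α)) :
    swapAndExtend x₀ y τ x = τ ⟨x, hx⟩ := dif_pos hx

lemma swapAndExtend_left : swapAndExtend x₀ y τ x₀ = y := by
  simp [swapAndExtend]

lemma swapAndExtend_right (hy : y ≠ x₀) : swapAndExtend x₀ y τ y = x₀ := by
  simp [swapAndExtend, hy]

lemma isFixedPointFreeInvolution_swapAndExtend (hy : y ≠ x₀)
    (hτ : IsFixedPointFreeInvolution τ) :
    IsFixedPointFreeInvolution (swapAndExtend x₀ y τ) := by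
  have key : ∀ x, swapAndExtend x₀ y τ (swapAndExtend x₀ y τ x) = x ∧
      swapAndExtend x₀ y τ x ≠ x := by
    intro x
    by_cases hx : x ∈ ({x₀, y}ᶜ : Finset α)
    · rw [swapAndExtend_of_mem hx, swapAndExtend_of_mem (τ ⟨x, hx⟩).2]
      exact ⟨congrArg Subtype.val (hτ.1 ⟨x, hx⟩),
        fun h => hτ.2 ⟨x, hx⟩ (Subtype.ext h)⟩
    · obtain rfl | rfl : x = x₀ ∨ x = y := by
        simpa only [mem_compl, mem_insert, mem_singleton, not_not] using hx
      · rw [swapAndExtend_left, swapAndExtend_right hy]; exact ⟨rfl, hy⟩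
      · rw [swapAndExtend_right hy, swapAndExtend_left]; exact ⟨rfl, hy.symm⟩
  exact ⟨fun x => (key x).1, fun x => (key x).2⟩

end swapAndExtend

lemma card_fixedPointFreeInvolution_eq_sum (x₀ : α) :
    Fintype.card {σ : α → α // IsFixedPointFreeInvolution σ} =
      ∑ y : {y : α // y ≠ x₀}, Fintype.card {τ : ({x₀, (y : α)}ᶜ : Finset α) →
        ({x₀, (y : α)}ᶜ : Finset α) // IsFixedPointFreeInvolution τ} := by
  rw [← Fintype.card_sigma]
  symm
  refine Fintype.card_of_bijective (f := fun p =>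
    ⟨swapAndExtend x₀ p.1 p.2.1, isFixedPointFreeInvolution_swapAndExtend p.1.2 p.2.2⟩)
    ⟨?_, ?_⟩
  · rintro ⟨⟨y, hy⟩, τ, hτ⟩ ⟨⟨y', hy'⟩, τ', hτ'⟩ h
    have h := congrArg Subtype.val h
    obtain rfl : y = y' := by
      simpa only [swapAndExtend_left] using congrFun h x₀
    obtain rfl : τ = τ' := funext fun z => Subtype.ext <| by
      simpa only [swapAndExtend_of_mem z.2] using congrFun h z
    rfl
  · rintro ⟨σ, hσ⟩
    have hmaps : ∀ x ∈ ({x₀, σ x₀}ᶜ : Finset α),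
        σ x ∈ ({x₀, σ x₀}ᶜ : Finset α) := by
      intro x hx
      simp only [mem_compl, mem_insert, mem_singleton, not_or] at hx ⊢
      exact ⟨fun h => hx.2 (by rw [← h, hσ.1]), fun h => hx.1 (hσ.1.injective h)⟩
    refine ⟨⟨⟨σ x₀, hσ.2 x₀⟩, fun x => ⟨σ x, hmaps x x.2⟩,
      fun x => Subtype.ext (hσ.1 x), fun x h => hσ.2 x (congrArg Subtype.val h)⟩, ?_⟩
    refine Subtype.ext (funext fun x => ?_)
    by_cases hx : x ∈ ({x₀, σ x₀}ᶜ : Finset α)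
    · exact swapAndExtend_of_mem hx
    · obtain rfl | rfl : x = x₀ ∨ x = σ x₀ := by
        simpa only [mem_compl, mem_insert, mem_singleton, not_not] using hx
      · exact swapAndExtend_left
      · exact (swapAndExtend_right (hσ.2 x₀)).trans (hσ.1 x₀).symm

theorem card_fixedPointFreeInvolution {m : ℕ} (h : Fintype.card α = 2 * m) :
    Fintype.card {σ : α → α // IsFixedPointFreeInvolution σ} = (2 * m - 1)‼ := by
  induction m generalizing α with
  | zero =>
    have : IsEmpty α := Fintype.card_eq_zero_iff.mp h
    refine Fintype.card_eq_one_iff.mpr ⟨⟨id, fun x => isEmptyElim x, fun x => isEmptyElim x⟩,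
      fun σ => Subtype.ext (funext fun x => isEmptyElim x)⟩
  | succ m ih =>
    obtain ⟨x₀⟩ : Nonempty α := Fintype.card_pos_iff.mp (by omega)
    have hcompl : ∀ y : {y : α // y ≠ x₀},
        Fintype.card ({x₀, (y : α)}ᶜ : Finset α) = 2 * m := by
      intro y
      rw [Fintype.card_coe, card_compl, card_pair y.2.symm, h]
      omega
    have hy : Fintype.card {y : α // y ≠ x₀} = 2 * m + 1 := by
      rw [Fintype.card_subtype_compl, Fintype.card_subtype_eq, h]
      omega
    rw [card_fixedPointFreeInvolution_eq_sum x₀, Finset.sum_congr rfl fun y _ => ih (hcompl y),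
      sum_const, Finset.card_univ, hy, smul_eq_mul, show 2 * (m + 1) - 1 = 2 * m + 1 by omega]
    cases m with
    | zero => rfl
    | succ m =>
      rw [show 2 * (m + 1) - 1 = 2 * m + 1 by omega, show 2 * (m + 1) + 1 = 2 * m + 1 + 2 by ring,
        doubleFactorial_add_two]

noncomputable def fixedPointFreeInvolutions (α : Type*) [Fintype α] [DecidableEq α] :
    Finset (α → α) :=
  {σ | IsFixedPointFreeInvolution σ}

theorem card_fixedPointFreeInvolutions {m : ℕ} (h : Fintype.card α = 2 * m) :
    #(fixedPointFreeInvolutions α) = (2 * m - 1)‼ := by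
  rw [fixedPointFreeInvolutions, ← Fintype.card_subtype]
  exact card_fixedPointFreeInvolution h

end FixedPointFreeInvolution

section Representatives

variable {ι : Type*} [LinearOrder ι] {σ : ι → ι}

lemma Function.Involutive.min_eq_min_iff (hσ : Function.Involutive σ) {i j : ι} :
    min i (σ i) = min j (σ j) ↔ i = j ∨ i = σ j := by
  constructor
  · intro h
    rcases min_choice i (σ i) with hi | hi <;> rcases min_choice j (σ j) with hj | hj <;>
      rw [hi, hj] at h
    · exact .inl h
    · exact .inr h
    · exact .inr (by rw [← h, hσ])
    · exact .inl (hσ.injective h)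
  · rintro (rfl | rfl)
    · rfl
    · rw [hσ, min_comm]

variable [Fintype ι]

def minReps (σ : ι → ι) : Finset ι := univ.image fun i => min i (σ i)

lemma min_mem_minReps (σ : ι → ι) (i : ι) : min i (σ i) ∈ minReps σ :=
  mem_image_of_mem _ (mem_univ i)

lemma Function.Involutive.min_eq_of_mem_minReps (hσ : Function.Involutive σ) {r : ι}
    (hr : r ∈ minReps σ) : min r (σ r) = r := by
  obtain ⟨j, -, rfl⟩ := mem_image.mp hr
  exact hσ.min_eq_min_iff.mpr (min_choice j (σ j))

lemma IsFixedPointFreeInvolution.card_minReps (hσ : IsFixedPointFreeInvolution σ) {m : ℕ}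
    (hι : Fintype.card ι = 2 * m) : #(minReps σ) = m := by
  suffices 2 * #(minReps σ) = Fintype.card ι by omega
  rw [← Finset.card_univ, card_eq_sum_card_fiberwise (s := (univ : Finset ι)) (t := minReps σ)
    fun i _ => min_mem_minReps σ i, mul_comm]
  refine (sum_const_nat fun r hr => ?_).symm
  obtain ⟨j, -, rfl⟩ := mem_image.mp hr
  have hfiber : {i ∈ (univ : Finset ι) | min i (σ i) = min j (σ j)} = {j, σ j} := by
    ext i
    simp [hσ.1.min_eq_min_iff]
  rw [hfiber, card_pair (hσ.2 j).symm]

variable {β : Type*}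

def pairExtend (σ : ι → ι) (v : minReps σ → β) (i : ι) : β :=
  v ⟨min i (σ i), min_mem_minReps σ i⟩

lemma pairExtend_of_mem (hσ : Function.Involutive σ) (v : minReps σ → β) (r : minReps σ) :
    pairExtend σ v r = v r :=
  congrArg v (Subtype.ext (hσ.min_eq_of_mem_minReps r.2))

lemma pairExtend_injective (hσ : Function.Involutive σ) :
    Function.Injective (pairExtend (β := β) σ) := fun v w h =>
  funext fun r => by rw [← pairExtend_of_mem hσ v r, ← pairExtend_of_mem hσ w r, h]

lemma pairExtend_restrict {R : ι → β} (hR : ∀ i, R (σ i) = R i) :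
    pairExtend σ (fun r => R r) = R := by
  funext i
  rcases min_choice i (σ i) with h | h <;> simp only [pairExtend, h, hR]

lemma pairExtend_eq_pairExtend_iff (hσ : Function.Involutive σ) {v : minReps σ → β}
    (hv : Function.Injective v) {i j : ι} :
    pairExtend σ v j = pairExtend σ v i ↔ j = i ∨ j = σ i := by
  rw [pairExtend, pairExtend, hv.eq_iff, Subtype.mk.injEq, hσ.min_eq_min_iff]

lemma pairExtend_apply_self (hσ : Function.Involutive σ) (v : minReps σ → β) (i : ι) :
    pairExtend σ v (σ i) = pairExtend σ v i :=
  congrArg v (Subtype.ext (hσ.min_eq_min_iff.mpr (.inr rfl)))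

lemma eq_of_pairExtend_eq {τ : ι → ι} (hσ : Function.Involutive σ)
    (hτ : IsFixedPointFreeInvolution τ) {v : minReps σ → β} (hv : Function.Injective v)
    {w : minReps τ → β} (h : pairExtend σ v = pairExtend τ w) : σ = τ := by
  funext i
  have hi : pairExtend σ v (τ i) = pairExtend σ v i := by
    rw [h, pairExtend_apply_self hτ.1]
  exact (((pairExtend_eq_pairExtend_iff hσ hv).mp hi).resolve_left (hτ.2 i)).symm

end Representatives

lemma Nat.mul_choose_sub_one (n : ℕ) {q : ℕ} (hq : q ≠ 0) :
    n * (n - 1).choose (q - 1) = q * n.choose q := by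
  obtain ⟨q, rfl⟩ := Nat.exists_eq_succ_of_ne_zero hq
  cases n with
  | zero => simp
  | succ n => simpa [mul_comm] using Nat.add_one_mul_choose_eq n q

section DisjointTuples

open Function

variable {α ι : Type*} [Fintype α] [Fintype ι] [DecidableEq ι] {q : ℕ}

noncomputable def disjointTuples (ι α : Type*) [Fintype ι] [DecidableEq ι] [Fintype α]
    (q : ℕ) : Finset (ι → Finset α) :=
  {v ∈ Fintype.piFinset fun _ : ι => powersetCard q univ | Pairwise (Disjoint on v)}

lemma injective_of_mem_disjointTuples (hq : q ≠ 0) {v : ι → Finset α}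
    (hv : v ∈ disjointTuples ι α q) : Injective v := by
  rw [disjointTuples, mem_filter, Fintype.mem_piFinset] at hv
  refine pairwise_ne_iff_injective.mp (hv.2.mono fun a b hab heq => hq ?_)
  have hself : Disjoint (v a) (v b) := hab
  rw [← heq] at hself
  rw [← mem_powersetCard_univ.mp (hv.1 a), disjoint_self.mp hself, bot_eq_empty, card_empty]

variable [DecidableEq α]

lemma card_filter_mem_powersetCard (hq : q ≠ 0) (x : α) :
    #{S ∈ powersetCard q (univ : Finset α) | x ∈ S} =
      (Fintype.card α - 1).choose (q - 1) := by
  have himage : {S ∈ powersetCard q (univ : Finset α) | x ∈ S} =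
      (powersetCard (q - 1) (univ.erase x)).image (insert x) := by
    ext S
    simp only [mem_filter, mem_powersetCard_univ]
    simp only [mem_image, mem_powersetCard, subset_erase]
    constructor
    · rintro ⟨hS, hx⟩
      refine ⟨S.erase x, ⟨⟨subset_univ _, notMem_erase x S⟩, ?_⟩, insert_erase hx⟩
      rw [card_erase_of_mem hx, hS]
    · rintro ⟨T, ⟨⟨-, hxT⟩, hT⟩, rfl⟩
      exact ⟨by rw [card_insert_of_notMem hxT, hT]; omega, mem_insert_self x T⟩
  rw [himage, Finset.card_image_of_injOn, card_powersetCard, card_erase_of_mem (mem_univ x),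
    Finset.card_univ]
  intro T hT T' hT' h
  simp only [mem_coe, mem_powersetCard, subset_erase] at hT hT'
  rw [← erase_insert hT.1.2, ← erase_insert hT'.1.2]
  exact congrArg (·.erase x) h

lemma card_mul_card_filter_not_disjoint_le (hq : q ≠ 0) {a b : ι} (hab : a ≠ b) :
    Fintype.card α *
        #{v ∈ Fintype.piFinset fun _ : ι => powersetCard q (univ : Finset α) |
          ¬Disjoint (v a) (v b)} ≤
      q ^ 2 * (Fintype.card α).choose q ^ Fintype.card ι := by
  set n := Fintype.card α
  set N := n.choose q
  set M := (n - 1).choose (q - 1)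
  let through (x : α) : Finset (ι → Finset α) := Fintype.piFinset fun c =>
    if c ∈ ({a, b} : Finset ι) then {S ∈ powersetCard q (univ : Finset α) | x ∈ S}
    else powersetCard q univ
  have hsub : {v ∈ Fintype.piFinset fun _ : ι => powersetCard q (univ : Finset α) |
      ¬Disjoint (v a) (v b)} ⊆ univ.biUnion through := by
    intro v hv
    rw [mem_filter, Fintype.mem_piFinset, not_disjoint_iff] at hv
    obtain ⟨hv, x, hxa, hxb⟩ := hv
    refine mem_biUnion.mpr ⟨x, mem_univ x, Fintype.mem_piFinset.mpr fun c => ?_⟩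
    split_ifs with hc
    · obtain rfl | rfl : c = a ∨ c = b := by simpa using hc
      · exact mem_filter.mpr ⟨hv c, hxa⟩
      · exact mem_filter.mpr ⟨hv c, hxb⟩
    · exact hv c
  have hthrough : ∀ x, #(through x) = M ^ 2 * N ^ (Fintype.card ι - 2) := by
    intro x
    simp only [through, Fintype.card_piFinset, apply_ite card, card_filter_mem_powersetCard hq,
      card_powersetCard, Finset.card_univ]
    rw [prod_ite, prod_const, prod_const, filter_mem_eq_inter, univ_inter, card_pair hab,
      filter_not, filter_mem_eq_inter, univ_inter, card_sdiff, inter_univ, card_pair hab,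
      Finset.card_univ]
  have hι : 2 ≤ Fintype.card ι := card_pair hab ▸ card_le_univ {a, b}
  calc n * #{v ∈ Fintype.piFinset fun _ : ι => powersetCard q (univ : Finset α) |
        ¬Disjoint (v a) (v b)}
      ≤ n * ∑ x, #(through x) := by gcongr; exact (card_le_card hsub).trans card_biUnion_le
    _ = (n * M) ^ 2 * N ^ (Fintype.card ι - 2) := by
      simp only [hthrough, sum_const, Finset.card_univ, smul_eq_mul]; ring
    _ = q ^ 2 * N ^ Fintype.card ι := by
      rw [Nat.mul_choose_sub_one n hq, mul_pow, mul_assoc, ← pow_add]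
      congr 2
      omega

lemma le_card_disjointTuples (hq : q ≠ 0) :
    Fintype.card α * (Fintype.card α).choose q ^ Fintype.card ι ≤
      Fintype.card α * #(disjointTuples ι α q) +
        Fintype.card ι ^ 2 * q ^ 2 * (Fintype.card α).choose q ^ Fintype.card ι := by
  set n := Fintype.card α
  set N := n.choose q
  set m := Fintype.card ι
  set F := Fintype.piFinset fun _ : ι => powersetCard q (univ : Finset α)
  have hF : #F = N ^ m := by simp [F, N, n, m, Fintype.card_piFinset, card_powersetCard]
  have hsub : F \ disjointTuples ι α q ⊆ univ.offDiag.biUnion fun p =>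
      {v ∈ F | ¬Disjoint (v p.1) (v p.2)} := by
    intro v hv
    obtain ⟨hvF, hv⟩ := mem_sdiff.mp hv
    have : ¬Pairwise (Disjoint on v) := fun h => hv (mem_filter.mpr ⟨hvF, h⟩)
    obtain ⟨a, b, hab, hv'⟩ : ∃ a b, a ≠ b ∧ ¬Disjoint (v a) (v b) := by
      simpa [Pairwise] using this
    exact mem_biUnion.mpr ⟨(a, b), mem_offDiag.mpr ⟨mem_univ a, mem_univ b, hab⟩,
      mem_filter.mpr ⟨hvF, hv'⟩⟩
  have hbad : n * #(F \ disjointTuples ι α q) ≤ m ^ 2 * q ^ 2 * N ^ m :=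
    calc n * #(F \ disjointTuples ι α q)
        ≤ ∑ p ∈ univ.offDiag, n * #{v ∈ F | ¬Disjoint (v p.1) (v p.2)} := by
          rw [← mul_sum]; gcongr; exact (card_le_card hsub).trans card_biUnion_le
      _ ≤ #(univ.offDiag : Finset (ι × ι)) * (q ^ 2 * N ^ m) :=
          sum_le_card_nsmul _ _ _ fun p hp =>
            card_mul_card_filter_not_disjoint_le hq (mem_offDiag.mp hp).2.2
      _ ≤ m ^ 2 * (q ^ 2 * N ^ m) := by
          gcongr
          rw [offDiag_card, Finset.card_univ, sq]
          exact Nat.sub_le _ _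
      _ = m ^ 2 * q ^ 2 * N ^ m := by ring
  have hsplit : #(F \ disjointTuples ι α q) + #(disjointTuples ι α q) = #F :=
    card_sdiff_add_card_eq_card (filter_subset _ _)
  calc n * N ^ m = n * #(F \ disjointTuples ι α q) + n * #(disjointTuples ι α q) := by
        rw [← hF, ← hsplit, mul_add]
    _ ≤ n * #(disjointTuples ι α q) + m ^ 2 * q ^ 2 * N ^ m := by linarith

end DisjointTuples

lemma PairTuple.exists_isFixedPointFreeInvolution {X : Type*} {k : ℕ} {R : Fin k → X}
    (hR : PairTuple R) : ∃ σ, IsFixedPointFreeInvolution σ ∧ ∀ i, R (σ i) = R i := by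
  have hpartner : ∀ i, ∃ j, (univ.filter fun j => R j = R i).erase i = {j} := fun i =>
    card_eq_one.mp (by rw [card_erase_of_mem (by simp), hR i])
  choose σ hσ using hpartner
  have hmem : ∀ i j, j ∈ (univ.filter fun j => R j = R i).erase i ↔ j = σ i := fun i j => by
    rw [hσ i, mem_singleton]
  have hval : ∀ i, σ i ≠ i ∧ R (σ i) = R i := fun i => by
    simpa using (hmem i (σ i)).mpr rfl
  refine ⟨σ, ⟨fun i => ((hmem (σ i) i).mp ?_).symm, fun i => (hval i).1⟩,
    fun i => (hval i).2⟩
  simp [(hval i).1.symm, (hval i).2]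

section PairTuples

variable {α : Type*} [Fintype α] [DecidableEq α] {q k m : ℕ}

-- The paper's `P_2(I_{n,q}^k)` and `A_{n,k}`, with `α` in place of `{1, …, n}`.
noncomputable def pairTuples (k : ℕ) (α : Type*) [Fintype α] [DecidableEq α] (q : ℕ) :
    Finset (Fin k → Finset α) :=
  {R | (∀ i, #(R i) = q) ∧ PairTuple R}

noncomputable def disjointPairTuples (k : ℕ) (α : Type*) [Fintype α] [DecidableEq α]
    (q : ℕ) : Finset (Fin k → Finset α) :=
  {R | (∀ i, #(R i) = q) ∧ PairTuple R ∧ ∀ i j, R i ≠ R j → Disjoint (R i) (R j)}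

lemma disjointPairTuples_subset_pairTuples : disjointPairTuples k α q ⊆ pairTuples k α q :=
  monotone_filter_right _ fun _ _ ⟨hcard, hpair, _⟩ => ⟨hcard, hpair⟩

lemma card_pairTuples_le (hk : k = 2 * m) :
    #(pairTuples k α q) ≤ (2 * m - 1)‼ * (Fintype.card α).choose q ^ m := by
  subst hk
  have hsub : pairTuples (2 * m) α q ⊆
      (fixedPointFreeInvolutions (Fin (2 * m))).biUnion fun σ =>
        (Fintype.piFinset fun _ : minReps σ => powersetCard q (univ : Finset α)).image
          (pairExtend σ) := by
    intro R hR
    obtain ⟨hcard, hpair⟩ := (mem_filter.mp hR).2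
    obtain ⟨σ, hσ, hRσ⟩ := hpair.exists_isFixedPointFreeInvolution
    refine mem_biUnion.mpr ⟨σ, mem_filter.mpr ⟨mem_univ σ, hσ⟩, mem_image.mpr ?_⟩
    exact ⟨fun r => R r, Fintype.mem_piFinset.mpr fun r => mem_powersetCard_univ.mpr (hcard r),
      pairExtend_restrict hRσ⟩
  calc #(pairTuples (2 * m) α q)
      ≤ ∑ σ ∈ fixedPointFreeInvolutions (Fin (2 * m)),
          (Fintype.card α).choose q ^ m := by
        refine (card_le_card hsub).trans (card_biUnion_le.trans (sum_le_sum fun σ hσ => ?_))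
        refine card_image_le.trans (le_of_eq ?_)
        rw [Fintype.card_piFinset, prod_const, card_powersetCard, Finset.card_univ,
          Finset.card_univ, Fintype.card_coe,
          (mem_filter.mp hσ).2.card_minReps (Fintype.card_fin _)]
    _ = (2 * m - 1)‼ * (Fintype.card α).choose q ^ m := by
        rw [sum_const, card_fixedPointFreeInvolutions (Fintype.card_fin _), smul_eq_mul]

lemma pairExtend_mem_disjointPairTuples (hq : q ≠ 0) {σ : Fin k → Fin k}
    (hσ : IsFixedPointFreeInvolution σ) {v : minReps σ → Finset α}
    (hv : v ∈ disjointTuples (minReps σ) α q) :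
    pairExtend σ v ∈ disjointPairTuples k α q := by
  have hinj := injective_of_mem_disjointTuples hq hv
  rw [disjointTuples, mem_filter, Fintype.mem_piFinset] at hv
  rw [disjointPairTuples, mem_filter]
  refine ⟨mem_univ _, fun i => mem_powersetCard_univ.mp (hv.1 _), fun i => ?_,
    fun i j hij => hv.2 fun h => hij (congrArg v h)⟩
  rw [← card_pair (hσ.2 i).symm]
  congr 1
  ext j
  simp [pairExtend_eq_pairExtend_iff hσ.1 hinj]

lemma sum_card_disjointTuples_le (hq : q ≠ 0) :
    ∑ σ ∈ fixedPointFreeInvolutions (Fin k),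
        #(disjointTuples (minReps σ) α q) ≤
      #(disjointPairTuples k α q) := by
  have hdisj : (fixedPointFreeInvolutions (Fin k) : Set (Fin k → Fin k)).PairwiseDisjoint
      fun σ => (disjointTuples (minReps σ) α q).image (pairExtend σ) := by
    intro σ hσ τ hτ hστ
    refine disjoint_left.mpr fun R hRσ hRτ => hστ ?_
    obtain ⟨v, hv, rfl⟩ := mem_image.mp hRσ
    obtain ⟨w, -, hw⟩ := mem_image.mp hRτ
    exact eq_of_pairExtend_eq (mem_filter.mp hσ).2.1 (mem_filter.mp hτ).2
      (injective_of_mem_disjointTuples hq hv) hw.symm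
  calc ∑ σ ∈ fixedPointFreeInvolutions (Fin k),
        #(disjointTuples (minReps σ) α q)
      = #((fixedPointFreeInvolutions (Fin k)).biUnion fun σ =>
          (disjointTuples (minReps σ) α q).image (pairExtend σ)) := by
        rw [card_biUnion hdisj]
        exact sum_congr rfl fun σ hσ =>
          (Finset.card_image_of_injective _ (pairExtend_injective (mem_filter.mp hσ).2.1)).symm
    _ ≤ _ := card_le_card <| biUnion_subset.mpr fun σ hσ => image_subset_iff.mpr fun v hv =>
        pairExtend_mem_disjointPairTuples hq (mem_filter.mp hσ).2 hv

lemma le_card_disjointPairTuples (hq : q ≠ 0) (hk : k = 2 * m) :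
    Fintype.card α * ((2 * m - 1)‼ * (Fintype.card α).choose q ^ m) ≤
      Fintype.card α * #(disjointPairTuples k α q) +
        m ^ 2 * q ^ 2 * ((2 * m - 1)‼ * (Fintype.card α).choose q ^ m) := by
  subst hk
  set n := Fintype.card α
  set N := n.choose q
  set I := fixedPointFreeInvolutions (Fin (2 * m))
  have hI : #I = (2 * m - 1)‼ := card_fixedPointFreeInvolutions (Fintype.card_fin _)
  have hσ : ∀ σ ∈ I,
      n * N ^ m ≤ n * #(disjointTuples (minReps σ) α q) + m ^ 2 * q ^ 2 * N ^ m := by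
    intro σ hσ
    simpa only [Fintype.card_coe, (mem_filter.mp hσ).2.card_minReps (Fintype.card_fin _)] using
      le_card_disjointTuples (ι := minReps σ) (α := α) hq
  calc n * ((2 * m - 1)‼ * N ^ m) = ∑ σ ∈ I, n * N ^ m := by
        rw [sum_const, hI, smul_eq_mul]; ring
    _ ≤ ∑ σ ∈ I, (n * #(disjointTuples (minReps σ) α q) + m ^ 2 * q ^ 2 * N ^ m) :=
        sum_le_sum hσ
    _ = n * ∑ σ ∈ I, #(disjointTuples (minReps σ) α q) +
          m ^ 2 * q ^ 2 * ((2 * m - 1)‼ * N ^ m) := by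
        rw [sum_add_distrib, ← mul_sum, sum_const, hI, smul_eq_mul]; ring
    _ ≤ n * #(disjointPairTuples (2 * m) α q) + m ^ 2 * q ^ 2 * ((2 * m - 1)‼ * N ^ m) := by
        gcongr
        exact sum_card_disjointTuples_le hq

lemma sub_card_disjointPairTuples_le (hq : q ≠ 0) (hk : k = 2 * m) (hα : 0 < Fintype.card α) :
    ((2 * m - 1)‼ * (Fintype.card α).choose q ^ m : ℝ) - #(disjointPairTuples k α q) ≤
      (k : ℝ) ^ 2 * q ^ 2 / (4 * Fintype.card α) * (2 * m - 1)‼ *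
        (Fintype.card α).choose q ^ m := by
  have hlow : (Fintype.card α : ℝ) * ((2 * m - 1)‼ * (Fintype.card α).choose q ^ m) ≤
      Fintype.card α * #(disjointPairTuples k α q) +
        m ^ 2 * q ^ 2 * ((2 * m - 1)‼ * (Fintype.card α).choose q ^ m) := by
    exact_mod_cast le_card_disjointPairTuples hq hk
  rw [show (k : ℝ) ^ 2 * q ^ 2 / (4 * Fintype.card α) * (2 * m - 1)‼ *
      (Fintype.card α).choose q ^ m =
      m ^ 2 * q ^ 2 * ((2 * m - 1)‼ * (Fintype.card α).choose q ^ m) / Fintype.card α by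
    rw [hk]; push_cast; field_simp; ring, le_div_iff₀ (by exact_mod_cast hα)]
  linarith

end PairTuples

theorem stmt5_general (n q k : ℕ) (hn : 0 < n) (hq : 1 ≤ q) (hk : Even k)
    (A B : Finset (Fin k → Finset (Fin n)))
    (hA : A = Finset.univ.filter fun R =>
      (∀ i, (R i).card = q) ∧ PairTuple R ∧
        ∀ i j, R i ≠ R j → Disjoint (R i) (R j))
    (hB : B = (Finset.univ.filter fun R : Fin k → Finset (Fin n) =>
      (∀ i, (R i).card = q) ∧ PairTuple R) \ A) :
    ((Nat.doubleFactorial (k - 1) : ℝ) * (1 - (k : ℝ) ^ 2 * (q : ℝ) ^ 2 / (4 * n)) *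
        (n.choose q : ℝ) ^ (k / 2) ≤ (A.card : ℝ)) ∧
    ((A.card : ℝ) ≤ (Nat.doubleFactorial (k - 1) : ℝ) * (n.choose q : ℝ) ^ (k / 2)) ∧
    ((B.card : ℝ) ≤ (k : ℝ) ^ 2 * (q : ℝ) ^ 2 / (4 * n) *
        (Nat.doubleFactorial (k - 1) : ℝ) * (n.choose q : ℝ) ^ (k / 2)) := by
  obtain ⟨m, rfl⟩ := hk
  have hm : m + m = 2 * m := (two_mul m).symm
  change A = disjointPairTuples (m + m) (Fin n) q at hA
  change B = pairTuples (m + m) (Fin n) q \ A at hB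
  have hAP : A ⊆ pairTuples (m + m) (Fin n) q := hA ▸ disjointPairTuples_subset_pairTuples
  have hAPr : (#A : ℝ) ≤ #(pairTuples (m + m) (Fin n) q) := by exact_mod_cast card_le_card hAP
  have hP : (#(pairTuples (m + m) (Fin n) q) : ℝ) ≤
      (2 * m - 1)‼ * (n.choose q : ℝ) ^ m := by
    exact_mod_cast Fintype.card_fin n ▸ card_pairTuples_le (α := Fin n) (q := q) hm
  have hdeficit := sub_card_disjointPairTuples_le (α := Fin n) (Nat.one_le_iff_ne_zero.mp hq) hm
    (by rwa [Fintype.card_fin])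
  rw [← hA, Fintype.card_fin] at hdeficit
  rw [hB, card_sdiff_of_subset hAP, Nat.cast_sub (card_le_card hAP),
    show m + m - 1 = 2 * m - 1 by omega, show (m + m) / 2 = m by omega]
  refine ⟨by linarith, by linarith, by linarith⟩

theorem stmt5 (n q k : ℕ) (hn : 0 < n) (hq : 1 ≤ q) (hqn : q ≤ n)
    (hk0 : 0 < k) (hk : Even k) (hkq : k * q / 2 ≤ n)
    (A B : Finset (Fin k → Finset (Fin n)))
    (hA : A = Finset.univ.filter fun R =>
      (∀ i, (R i).card = q) ∧ PairTuple R ∧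
        ∀ i j, R i ≠ R j → Disjoint (R i) (R j))
    (hB : B = (Finset.univ.filter fun R : Fin k → Finset (Fin n) =>
      (∀ i, (R i).card = q) ∧ PairTuple R) \ A) :
    ((Nat.doubleFactorial (k - 1) : ℝ) * (1 - (k : ℝ) ^ 2 * (q : ℝ) ^ 2 / (4 * n)) *
        (n.choose q : ℝ) ^ (k / 2) ≤ (A.card : ℝ)) ∧
    ((A.card : ℝ) ≤ (Nat.doubleFactorial (k - 1) : ℝ) * (n.choose q : ℝ) ^ (k / 2)) ∧
    ((B.card : ℝ) ≤ (k : ℝ) ^ 2 * (q : ℝ) ^ 2 / (4 * n) *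
        (Nat.doubleFactorial (k - 1) : ℝ) * (n.choose q : ℝ) ^ (k / 2)) :=
  stmt5_general n q k hn hq hk A B hA hB
end

section
/- For integers p, q, m with 0 ≤ q ≤ m and 0 ≤ 2p ≤ m, one has Σ_k (−1)^k C(p,k) C(m−p, q−k) = Σ_k (−1)^k C(p,k) C(m−2p, q−2k), where both sums range over all integers k (binomial coefficients with out-of-range arguments being zero). -/
open BigOperators

open Polynomial in
lemma stmt7_expand (p n : ℕ) : ((1 : ℤ[X]) - X ^ n) ^ p =
    ∑ i ∈ Finset.range (p + 1), C ((-1 : ℤ) ^ i * p.choose i) * X ^ (n * i) := by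
  rw [sub_eq_add_neg, add_comm, add_pow]
  refine Finset.sum_congr rfl fun i _ => ?_
  rw [neg_pow, ← pow_mul, one_pow, mul_one, map_mul, map_pow, map_neg, map_one, map_natCast]
  push_cast
  ring

open Polynomial in
lemma stmt7_coeff (p n q : ℕ) (B : ℤ[X]) :
    (((1 : ℤ[X]) - X ^ n) ^ p * B).coeff q =
      ∑ i ∈ Finset.range (p + 1),
        (-1 : ℤ) ^ i * p.choose i * (if n * i ≤ q then B.coeff (q - n * i) else 0) := by
  rw [stmt7_expand, Finset.sum_mul, finset_sum_coeff]
  refine Finset.sum_congr rfl fun i _ => ?_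
  rw [mul_right_comm, coeff_mul_X_pow']
  simp only [coeff_C_mul, mul_ite, mul_zero, mul_assoc]

lemma stmt7_sum_swap (p n q : ℕ) (hn : 0 < n) (c : ℕ → ℤ) :
    ∑ i ∈ Finset.range (p + 1),
        (-1 : ℤ) ^ i * p.choose i * (if n * i ≤ q then c (q - n * i) else 0) =
      ∑ i ∈ Finset.range (q / n + 1), (-1 : ℤ) ^ i * p.choose i * c (q - n * i) := by
  set N := max p (q / n) + 1 with hN
  have h1 : Finset.range (p + 1) ⊆ Finset.range N := Finset.range_subset_range.2 (by omega)
  have h2 : Finset.range (q / n + 1) ⊆ Finset.range N := Finset.range_subset_range.2 (by omega)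
  rw [Finset.sum_subset h1 (fun i _ hi => by
    have hpi : p < i := by simp only [Finset.mem_range] at *; omega
    simp [Nat.choose_eq_zero_of_lt hpi])]
  rw [← Finset.sum_subset h2 (fun i _ hi => by
    have hqi : q / n < i := by simp only [Finset.mem_range] at *; omega
    have : ¬ n * i ≤ q := by
      intro h
      rw [mul_comm] at h
      exact absurd ((Nat.le_div_iff_mul_le hn).2 h) (by omega)
    simp [this])]
  refine Finset.sum_congr rfl fun i hi => ?_
  simp only [Finset.mem_range] at hi
  have h' : i * n ≤ q := (Nat.le_div_iff_mul_le hn).1 (by omega)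
  rw [if_pos (mul_comm i n ▸ h')]

open Polynomial in
theorem stmt7 (p q m : ℕ) (hq : q ≤ m) (hp : 2 * p ≤ m) :
    ∑ k ∈ Finset.range (q + 1),
        (-1 : ℤ) ^ k * (p.choose k) * ((m - p).choose (q - k)) =
      ∑ k ∈ Finset.range (q / 2 + 1),
        (-1 : ℤ) ^ k * (p.choose k) * ((m - 2 * p).choose (q - 2 * k)) := by
  have key : ((1 : ℤ[X]) - X ^ 1) ^ p * (1 + X) ^ (m - p)
      = ((1 : ℤ[X]) - X ^ 2) ^ p * (1 + X) ^ (m - 2 * p) := by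
    have h : m - p = p + (m - 2 * p) := by omega
    rw [h, pow_add, ← mul_assoc, ← mul_pow]
    congr 2
    ring
  have hL := stmt7_coeff p 1 q ((1 + X : ℤ[X]) ^ (m - p))
  have hR := stmt7_coeff p 2 q ((1 + X : ℤ[X]) ^ (m - 2 * p))
  rw [key] at hL
  rw [hR] at hL
  rw [stmt7_sum_swap p 1 q one_pos, stmt7_sum_swap p 2 q two_pos] at hL
  simpa [coeff_one_add_X_pow, Nat.div_one] using hL.symm
end

section
/- For integers p, q, m with m ≥ 1 and 0 ≤ p, q ≤ m, one has F(p,q,m) = F(q,p,m), F(p,q,m) = (−1)^q F(m−p, q, m), and F(p,q,m) = (−1)^p F(p, m−q, m). -/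
open BigOperators

/-- `F(p,q,m) = (Σ_k (−1)^k C(p,k) C(m−p, q−k)) / C(m,q)`. -/
noncomputable def Fpqm (p q m : ℕ) : ℝ :=
  (∑ k ∈ Finset.range (q + 1),
      (-1 : ℝ) ^ k * (p.choose k) * ((m - p).choose (q - k))) / (m.choose q)

/-- The numerator of `Fpqm`: an (un-normalized) Krawtchouk-type sum. -/
noncomputable def Kpq (p q m : ℕ) : ℝ :=
  ∑ k ∈ Finset.range (q + 1),
      (-1 : ℝ) ^ k * (p.choose k) * ((m - p).choose (q - k))

lemma FK (p q m : ℕ) : Fpqm p q m = Kpq p q m / (m.choose q) := rfl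

lemma key_term (k p q m : ℕ) (hkp : k ≤ p) (hkq : k ≤ q) (hp : p ≤ m) (hq : q ≤ m) :
    (m.choose p : ℝ) * p.choose k * ((m - p).choose (q - k)) =
    (m.choose q : ℝ) * q.choose k * ((m - q).choose (p - k)) := by
  rcases le_or_gt (p + q) (m + k) with h | h
  · have h1 : q - k ≤ m - p := by omega
    have h2 : p - k ≤ m - q := by omega
    rw [Nat.cast_choose ℝ hp, Nat.cast_choose ℝ hq, Nat.cast_choose ℝ hkp,
      Nat.cast_choose ℝ hkq, Nat.cast_choose ℝ h1, Nat.cast_choose ℝ h2]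
    have e1 : m - p - (q - k) = m - q - (p - k) := by omega
    rw [e1]
    have f0 : ∀ n : ℕ, ((n.factorial : ℝ)) ≠ 0 :=
      fun n => Nat.cast_ne_zero.mpr n.factorial_ne_zero
    field_simp
  · have c1 : (m - p).choose (q - k) = 0 := Nat.choose_eq_zero_of_lt (by omega)
    have c2 : (m - q).choose (p - k) = 0 := Nat.choose_eq_zero_of_lt (by omega)
    rw [c1, c2]; simp

lemma reciprocity (p q m : ℕ) (hp : p ≤ m) (hq : q ≤ m) :
    (m.choose p : ℝ) * Kpq p q m = (m.choose q : ℝ) * Kpq q p m := by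
  unfold Kpq
  rw [Finset.mul_sum, Finset.mul_sum]
  have trunc : ∀ a b : ℕ, b ≤ m →
      ∑ k ∈ Finset.range (b + 1),
          (m.choose a : ℝ) * ((-1:ℝ)^k * (a.choose k) * ((m - a).choose (b - k)))
      = ∑ k ∈ Finset.range (min a b + 1),
          (m.choose a : ℝ) * ((-1:ℝ)^k * (a.choose k) * ((m - a).choose (b - k))) := by
    intro a b hb
    apply (Finset.sum_subset ?_ ?_).symm
    · intro x hx; simp only [Finset.mem_range] at hx ⊢; omega
    · intro x hx hx'
      simp only [Finset.mem_range] at hx hx'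
      have : a.choose x = 0 := Nat.choose_eq_zero_of_lt (by omega)
      rw [this]; simp
  rw [trunc p q hq, trunc q p hp, min_comm q p]
  apply Finset.sum_congr rfl
  intro k hk
  simp only [Finset.mem_range] at hk
  have hkey := key_term k p q m (by omega) (by omega) hp hq
  linear_combination ((-1:ℝ)^k) * hkey

lemma reflectK (p q m : ℕ) (hp : p ≤ m) :
    Kpq (m - p) q m = (-1 : ℝ) ^ q * Kpq p q m := by
  unfold Kpq
  have hmp : m - (m - p) = p := by omega
  rw [hmp, Finset.mul_sum]
  conv_rhs => rw [← Finset.sum_range_reflect]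
  apply Finset.sum_congr rfl
  intro k hk
  simp only [Finset.mem_range, Nat.add_sub_cancel] at hk ⊢
  have e1 : q - (q - k) = k := by omega
  rw [e1]
  have e2 : (-1:ℝ)^q * (-1:ℝ)^(q-k) = (-1:ℝ)^k := by
    rw [← pow_add]
    have : q + (q - k) = k + 2 * (q - k) := by omega
    rw [this, pow_add, pow_mul]
    simp
  calc (-1:ℝ)^k * ((m-p).choose k) * (p.choose (q-k))
      = ((-1:ℝ)^q * (-1:ℝ)^(q-k)) * ((m-p).choose k) * (p.choose (q-k)) := by rw [e2]
    _ = (-1:ℝ)^q * ((-1:ℝ)^(q-k) * (p.choose (q-k)) * ((m-p).choose k)) := by ring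

lemma Fsym (p q m : ℕ) (hp : p ≤ m) (hq : q ≤ m) : Fpqm p q m = Fpqm q p m := by
  have hq0 : ((m.choose q : ℝ)) ≠ 0 := Nat.cast_ne_zero.mpr (Nat.choose_pos hq).ne'
  have hp0 : ((m.choose p : ℝ)) ≠ 0 := Nat.cast_ne_zero.mpr (Nat.choose_pos hp).ne'
  rw [FK, FK, div_eq_div_iff hq0 hp0]
  linear_combination reciprocity p q m hp hq

lemma Fflip (p q m : ℕ) (hp : p ≤ m) :
    Fpqm p q m = (-1:ℝ)^q * Fpqm (m - p) q m := by
  rw [FK, FK, reflectK p q m hp, ← mul_div_assoc, ← mul_assoc]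
  have h : (-1:ℝ)^q * (-1:ℝ)^q = 1 := by
    rw [← pow_add, ← two_mul, pow_mul]; norm_num
  rw [h, one_mul]

theorem stmt8 (p q m : ℕ) (hm : 1 ≤ m) (hp : p ≤ m) (hq : q ≤ m) :
    Fpqm p q m = Fpqm q p m ∧
    Fpqm p q m = (-1 : ℝ) ^ q * Fpqm (m - p) q m ∧
    Fpqm p q m = (-1 : ℝ) ^ p * Fpqm p (m - q) m := by
  refine ⟨Fsym p q m hp hq, Fflip p q m hp, ?_⟩
  rw [Fsym p q m hp hq, Fflip q p m hq, Fsym (m - q) p m (Nat.sub_le m q) hp]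
end

section
/- For integers p, q, m with m ≥ 1 and 0 ≤ p, q ≤ m, one has |F(p,q,m)| ≤ exp(− min(p, m−p) · min(q, m−q) / (2m)). -/
open BigOperators

/-!
The numerator of `F(p,q,m)` is the Krawtchouk polynomial `K_q(p)`. Up to the symmetries
`K_q(m - p) = (-1)^q K_q(p)` and `C(m,p) K_q(p) = C(m,q) K_p(q)` we may assume `p ≤ q ≤ m/2`.
Then `(1 - x)^p (1 + x)^(m-p) = (1 - x²)^p (1 + x)^(m-2p)` writes `K_q(p)` as an alternating sum of
the terms `C(p,j) C(m-2p, q-2j)`, which are log-concave, hence unimodal, so `|K_q(p)|` is at most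
the largest term. By Vandermonde `C(p,j)² C(m-2p, q-2j) ≤ C(m,q)`, and comparing consecutive ratios
of binomial coefficients gives `C(m-2p, q-2j) ≤ C(m,q) exp(-(2p(q-2j) + 4j²)/m) ≤ C(m,q) exp(-pq/m)`;
multiplying the two bounds, every term is at most `C(m,q) exp(-pq/(2m))`.
-/

open Finset Polynomial Real

namespace Nat

theorem choose_mul_choose_le_add_choose_add (a b c d : ℕ) :
    a.choose c * b.choose d ≤ (a + b).choose (c + d) := by
  rw [Nat.add_choose_eq]
  exact single_le_sum (f := fun ij : ℕ × ℕ => a.choose ij.1 * b.choose ij.2)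
    (fun _ _ => Nat.zero_le _) (mem_antidiagonal.mpr rfl : (c, d) ∈ antidiagonal (c + d))

theorem choose_mul_choose_sub_comm (n a b : ℕ) :
    n.choose a * (n - a).choose b = n.choose b * (n - b).choose a := by
  have ha := Nat.choose_mul (n := n) (k := a + b) (s := a) (Nat.le_add_right a b)
  have hb := Nat.choose_mul (n := n) (k := a + b) (s := b) (Nat.le_add_left b a)
  rw [Nat.add_sub_cancel_left] at ha
  rw [Nat.add_sub_cancel] at hb
  rw [← ha, ← hb, Nat.choose_symm_add]

theorem choose_mul_choose_mul_choose_sub_comm {m p q k : ℕ} (hkp : k ≤ p) (hkq : k ≤ q) :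
    m.choose p * (p.choose k * (m - p).choose (q - k)) =
      m.choose q * (q.choose k * (m - q).choose (p - k)) := by
  have hp := choose_mul_choose_sub_comm (m - k) (p - k) (q - k)
  rw [show m - k - (p - k) = m - p by omega, show m - k - (q - k) = m - q by omega] at hp
  calc m.choose p * (p.choose k * (m - p).choose (q - k))
      = m.choose k * ((m - k).choose (p - k) * (m - p).choose (q - k)) := by
        rw [← mul_assoc, Nat.choose_mul hkp, mul_assoc]
    _ = m.choose q * (q.choose k * (m - q).choose (p - k)) := by
        rw [hp, ← mul_assoc, ← Nat.choose_mul hkq, mul_assoc]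

theorem choose_mul_choose_add_two_le (n k : ℕ) :
    n.choose k * n.choose (k + 2) ≤ n.choose (k + 1) ^ 2 := by
  have h₁ := Nat.choose_succ_right_eq n k
  have h₂ := Nat.choose_succ_right_eq n (k + 1)
  refine Nat.le_of_mul_le_mul_right (c := (k + 1) * (k + 2)) ?_ (by positivity)
  calc n.choose k * n.choose (k + 2) * ((k + 1) * (k + 2))
      = n.choose k * (k + 1) * (n.choose (k + 1) * (n - (k + 1))) := by rw [← h₂]; ring
    _ ≤ n.choose k * (k + 2) * (n.choose (k + 1) * (n - k)) := by gcongr <;> omega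
    _ = n.choose (k + 1) * (n.choose k * (n - k)) * (k + 2) := by ring
    _ = n.choose (k + 1) ^ 2 * ((k + 1) * (k + 2)) := by rw [← h₁]; ring

theorem choose_mul_choose_add_four_le (n k : ℕ) :
    n.choose k * n.choose (k + 4) ≤ n.choose (k + 2) ^ 2 := by
  rcases Nat.eq_zero_or_pos (n.choose (k + 2)) with h₀ | hpos
  · rw [Nat.choose_eq_zero_iff] at h₀
    simp [Nat.choose_eq_zero_of_lt (show n < k + 4 by omega)]
  · refine Nat.le_of_mul_le_mul_right (c := n.choose (k + 2) ^ 2) ?_ (by positivity)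
    calc n.choose k * n.choose (k + 4) * n.choose (k + 2) ^ 2
        = (n.choose k * n.choose (k + 2)) * (n.choose (k + 2) * n.choose (k + 4)) := by ring
      _ ≤ n.choose (k + 1) ^ 2 * n.choose (k + 3) ^ 2 :=
        Nat.mul_le_mul (choose_mul_choose_add_two_le n k) (choose_mul_choose_add_two_le n (k + 2))
      _ = (n.choose (k + 1) * n.choose (k + 3)) ^ 2 := by ring
      _ ≤ (n.choose (k + 2) ^ 2) ^ 2 := by gcongr; exact choose_mul_choose_add_two_le n (k + 1)
      _ = n.choose (k + 2) ^ 2 * n.choose (k + 2) ^ 2 := by ring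

end Nat

theorem Finset.sum_range_succ_ite_two_dvd {M : Type*} [AddCommMonoid M] (f : ℕ → M) (n : ℕ) :
    ∑ k ∈ range (n + 1), (if 2 ∣ k then f k else 0) = ∑ j ∈ range (n / 2 + 1), f (2 * j) := by
  rw [← sum_filter]
  have : (range (n + 1)).filter (2 ∣ ·) = (range (n / 2 + 1)).image (2 * ·) := by
    ext k
    simp only [mem_filter, mem_range, mem_image]
    constructor
    · rintro ⟨hk, j, rfl⟩
      exact ⟨j, by omega, rfl⟩
    · rintro ⟨j, hj, rfl⟩
      exact ⟨by omega, dvd_mul_right 2 j⟩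
  rw [this, sum_image fun _ _ _ _ h => by simpa using h]

section Coefficients

variable {R : Type*} [CommRing R]

theorem Polynomial.coeff_one_sub_X_pow (p k : ℕ) :
    ((1 - X : R[X]) ^ p).coeff k = (-1) ^ k * p.choose k := by
  have : (1 - X : R[X]) ^ p = ((1 + X) ^ p).comp (C (-1) * X) := by
    simp [sub_eq_add_neg]
  rw [this, comp_C_mul_X_coeff, coeff_one_add_X_pow, mul_comm]

theorem Polynomial.coeff_one_sub_X_sq_pow (p k : ℕ) :
    ((1 - X ^ 2 : R[X]) ^ p).coeff k = if 2 ∣ k then (-1 : R) ^ (k / 2) * p.choose (k / 2) else 0 := by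
  have : (1 - X ^ 2 : R[X]) ^ p = expand R 2 ((1 - X) ^ p) := by simp
  rw [this, coeff_expand two_pos, coeff_one_sub_X_pow]

end Coefficients

section AlternatingSums

variable (b : ℕ → ℝ)

theorem neg_one_pow_succ_mul_sum_range_succ (n : ℕ) :
    (-1) ^ (n + 1) * ∑ j ∈ range (n + 2), (-1) ^ j * b j =
      b (n + 1) - (-1) ^ n * ∑ j ∈ range (n + 1), (-1) ^ j * b j := by
  have hsq : ((-1 : ℝ) ^ n) ^ 2 = 1 := by rw [← pow_mul, pow_mul', neg_one_sq, one_pow]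
  rw [sum_range_succ, pow_succ]
  linear_combination b (n + 1) * hsq

theorem abs_sum_range_neg_one_pow_mul_le {N j₀ : ℕ} (hj₀ : j₀ ≤ N) (hb : ∀ i, 0 ≤ b i)
    (hup : ∀ i < j₀, b i ≤ b (i + 1)) (hdown : ∀ i, j₀ ≤ i → i < N → b (i + 1) ≤ b i) :
    |∑ j ∈ range (N + 1), (-1) ^ j * b j| ≤ b j₀ := by
  set u : ℕ → ℝ := fun n => (-1) ^ n * ∑ j ∈ range (n + 1), (-1) ^ j * b j with hu
  have hstep (n : ℕ) : u (n + 1) = b (n + 1) - u n := neg_one_pow_succ_mul_sum_range_succ b n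
  have hascent (n : ℕ) (hn : n ≤ j₀) : 0 ≤ u n ∧ u n ≤ b n := by
    induction n with
    | zero => simp [hu, hb 0]
    | succ n ih =>
      obtain ⟨h₀, h₁⟩ := ih (by omega)
      rw [hstep]
      constructor <;> linarith [hup n (by omega), hb (n + 1)]
  have hdescent (n : ℕ) (hn : j₀ ≤ n) (hnN : n ≤ N) : b n - b j₀ ≤ u n ∧ u n ≤ b j₀ := by
    induction n, hn using Nat.le_induction with
    | base => constructor <;> linarith [hascent j₀ le_rfl]
    | succ n hn ih =>
      obtain ⟨h₀, h₁⟩ := ih (by omega)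
      rw [hstep]
      constructor <;> linarith [hdown n hn (by omega)]
  obtain ⟨h₀, h₁⟩ := hdescent N hj₀ le_rfl
  have : |u N| = |∑ j ∈ range (N + 1), (-1) ^ j * b j| := by simp [hu, abs_mul]
  rw [← this, abs_le]
  constructor <;> linarith [hb N]

variable {b} {N : ℕ}

theorem succ_lt_or_eq_zero_of_logConcave (hb : ∀ i, 0 ≤ b i)
    (hlc : ∀ i, i + 2 ≤ N → b i * b (i + 2) ≤ b (i + 1) ^ 2)
    (hsupp : ∀ i k l, i ≤ k → k ≤ l → l ≤ N → b i ≠ 0 → b l ≠ 0 → b k ≠ 0)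
    {j₀ : ℕ} (hdrop : b (j₀ + 1) < b j₀) (i : ℕ) (hi : j₀ ≤ i) (hiN : i < N) :
    b (i + 1) < b i ∨ b (i + 1) = 0 := by
  induction i, hi using Nat.le_induction with
  | base => exact .inl hdrop
  | succ i hi ih =>
    by_contra! h
    obtain ⟨hle, hne⟩ := h
    have hj₀ : b j₀ ≠ 0 := ((hb (j₀ + 1)).trans_lt hdrop).ne'
    have hpos : 0 < b (i + 1) :=
      (hb _).lt_of_ne (hsupp j₀ (i + 1) (i + 2) (by omega) (by omega) hiN hj₀ hne).symm
    have hlt : b (i + 1) < b i := (ih (by omega)).resolve_right hpos.ne'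
    -- `b i * b (i + 2) > b (i + 1) * b (i + 2) ≥ b (i + 1) ^ 2`
    nlinarith [hlc i (by omega), mul_lt_mul_of_pos_right hlt (hpos.trans_le hle)]

theorem exists_unimodal_of_logConcave (hb : ∀ i, 0 ≤ b i)
    (hlc : ∀ i, i + 2 ≤ N → b i * b (i + 2) ≤ b (i + 1) ^ 2)
    (hsupp : ∀ i k l, i ≤ k → k ≤ l → l ≤ N → b i ≠ 0 → b l ≠ 0 → b k ≠ 0) :
    ∃ j₀ ≤ N, (∀ i < j₀, b i ≤ b (i + 1)) ∧ (∀ i, j₀ ≤ i → i < N → b (i + 1) ≤ b i) := by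
  classical
  by_cases hdrop : ∃ i, i < N ∧ b (i + 1) < b i
  · obtain ⟨hN, hj₀⟩ := Nat.find_spec hdrop
    refine ⟨Nat.find hdrop, hN.le, fun i hi => ?_, fun i hi hiN => ?_⟩
    · exact not_lt.mp fun h => Nat.find_min hdrop hi ⟨by omega, h⟩
    · rcases succ_lt_or_eq_zero_of_logConcave hb hlc hsupp hj₀ i hi hiN with h | h
      · exact h.le
      · exact h ▸ hb i
  · exact ⟨N, le_rfl, fun i hi => not_lt.mp fun h => hdrop ⟨i, hi, h⟩,
      fun i hi hiN => absurd hiN (by omega)⟩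

end AlternatingSums

theorem cast_choose_succ_mul {n k : ℕ} (hk : k ≤ n) :
    (n.choose (k + 1) : ℝ) * (k + 1) = n.choose k * (n - k) := by
  exact_mod_cast Nat.choose_succ_right_eq n k

theorem choose_sub_le_choose_mul_exp (n a t : ℕ) :
    ((n - a).choose t : ℝ) ≤ n.choose t * exp (-(a * t / n)) := by
  induction t with
  | zero => simp
  | succ t ih =>
    rcases lt_or_ge (n - a) (t + 1) with h | h
    · rw [Nat.choose_eq_zero_of_lt h, Nat.cast_zero]
      positivity
    have hfactor : ((n - a : ℕ) : ℝ) - t ≤ (n - t) * exp (-(a / n)) := by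
      have hn : (0 : ℝ) < n := by exact_mod_cast (show 0 < n by omega)
      have htn : (t : ℝ) ≤ n := by exact_mod_cast (show t ≤ n by omega)
      calc ((n - a : ℕ) : ℝ) - t ≤ (n - t) * (1 - a / n) := by
            rw [Nat.cast_sub (by omega)]
            field_simp
            nlinarith [(Nat.cast_nonneg a : (0 : ℝ) ≤ a), (Nat.cast_nonneg t : (0 : ℝ) ≤ t)]
        _ ≤ (n - t) * exp (-(a / n)) := by
            gcongr
            exact one_sub_le_exp_neg _
    refine le_of_mul_le_mul_right ?_ (show (0 : ℝ) < t + 1 by positivity)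
    calc ((n - a).choose (t + 1) : ℝ) * (t + 1) = (n - a).choose t * ((n - a : ℕ) - t) :=
          cast_choose_succ_mul (by omega)
      _ ≤ (n.choose t * exp (-(a * t / n))) * ((n - t) * exp (-(a / n))) := by
          gcongr
          exact sub_nonneg.mpr (by exact_mod_cast (show t ≤ n - a by omega))
      _ = n.choose t * (n - t) * exp (-(a * (t + 1 : ℕ) / n)) := by
          rw [mul_mul_mul_comm, ← exp_add]
          push_cast
          ring_nf
      _ = n.choose (t + 1) * exp (-(a * (t + 1 : ℕ) / n)) * (t + 1) := by
          rw [← cast_choose_succ_mul (show t ≤ n by omega)]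
          ring

theorem choose_sub_le_choose_mul_exp_sq {n q : ℕ} (hq : 2 * q ≤ n) (s : ℕ) (hs : s ≤ q) :
    (n.choose (q - s) : ℝ) ≤ n.choose q * exp (-(s ^ 2 / n)) := by
  induction s with
  | zero => simp
  | succ s ih =>
    obtain ⟨r, rfl⟩ : ∃ r, q = r + s + 1 := ⟨q - s - 1, by omega⟩
    rw [show r + s + 1 - (s + 1) = r by omega]
    have ih := ih (by omega)
    rw [show r + s + 1 - s = r + 1 by omega] at ih
    have hn : (0 : ℝ) < n := by exact_mod_cast (show 0 < n by omega)
    have hrn : (r : ℝ) + 1 ≤ n := by exact_mod_cast (show r + 1 ≤ n by omega)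
    have hfactor : (r : ℝ) + 1 ≤ (n - r) * exp (-((2 * s + 1) / n)) := by
      have h2q : 2 * ((r : ℝ) + s + 1) ≤ n := by exact_mod_cast hq
      calc (r : ℝ) + 1 ≤ (n - r) * (1 - (2 * s + 1) / n) := by
            field_simp
            -- `(n - r)(n - 2s - 1) - (r + 1) n = n (n - 2q) + r (2s + 1)`
            nlinarith [mul_nonneg hn.le (sub_nonneg.mpr h2q),
              (Nat.cast_nonneg r : (0 : ℝ) ≤ r), (Nat.cast_nonneg s : (0 : ℝ) ≤ s)]
        _ ≤ (n - r) * exp (-((2 * s + 1) / n)) := by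
            gcongr
            · linarith
            · exact one_sub_le_exp_neg _
    refine le_of_mul_le_mul_right ?_ (show (0 : ℝ) < n - r by linarith)
    calc (n.choose r : ℝ) * (n - r) = n.choose (r + 1) * (r + 1) :=
          (cast_choose_succ_mul (by omega)).symm
      _ ≤ (n.choose (r + s + 1) * exp (-(s ^ 2 / n))) * ((n - r) * exp (-((2 * s + 1) / n))) := by
          gcongr
      _ = n.choose (r + s + 1) * exp (-(((s + 1 : ℕ) : ℝ) ^ 2 / n)) * (n - r) := by
          rw [mul_mul_mul_comm, ← exp_add]
          push_cast
          ring_nf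

theorem choose_mul_choose_le_choose_mul_exp {p q m j : ℕ} (hpq : p ≤ q) (hqm : 2 * q ≤ m)
    (hj : 2 * j ≤ q) :
    (p.choose j : ℝ) * (m - 2 * p).choose (q - 2 * j) ≤ m.choose q * exp (-(p * q / (2 * m))) := by
  set A : ℝ := ↑(p.choose j)
  set B : ℝ := ↑((m - 2 * p).choose (q - 2 * j))
  set C : ℝ := ↑(m.choose q)
  have hvandermonde : A ^ 2 * B ≤ C := by
    have h₁ := Nat.choose_mul_choose_le_add_choose_add p p j j
    have h₂ := Nat.choose_mul_choose_le_add_choose_add (p + p) (m - 2 * p) (j + j) (q - 2 * j)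
    rw [show p + p + (m - 2 * p) = m by omega, show j + j + (q - 2 * j) = q by omega] at h₂
    have : p.choose j ^ 2 * (m - 2 * p).choose (q - 2 * j) ≤ m.choose q := by
      rw [sq]
      exact (Nat.mul_le_mul_right _ h₁).trans h₂
    simp only [A, B, C]
    exact_mod_cast this
  have hexponent : (p * q : ℝ) ≤ ((2 * p * (q - 2 * j) + (2 * j) ^ 2 : ℕ) : ℝ) := by
    have hp : (p : ℝ) ≤ q := by exact_mod_cast hpq
    push_cast [Nat.cast_sub hj]
    -- the difference is `(p - 2j)² + p (q - p)`
    nlinarith [sq_nonneg ((p : ℝ) - 2 * j), mul_nonneg (Nat.cast_nonneg p) (sub_nonneg.mpr hp)]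
  have hB : B ≤ C * exp (-(p * q / m)) := by
    calc B ≤ m.choose (q - 2 * j) * exp (-((2 * p : ℕ) * (q - 2 * j : ℕ) / m)) :=
          choose_sub_le_choose_mul_exp m (2 * p) (q - 2 * j)
      _ ≤ C * exp (-((2 * j : ℕ) ^ 2 / m)) * exp (-((2 * p : ℕ) * (q - 2 * j : ℕ) / m)) := by
          gcongr
          exact choose_sub_le_choose_mul_exp_sq hqm (2 * j) hj
      _ = C * exp (-((2 * p * (q - 2 * j) + (2 * j) ^ 2 : ℕ) / m)) := by
          rw [mul_assoc, ← exp_add]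
          push_cast
          ring_nf
      _ ≤ C * exp (-(p * q / m)) := by gcongr
  have hsq : (A * B) ^ 2 ≤ (C * exp (-(p * q / (2 * m)))) ^ 2 := by
    calc (A * B) ^ 2 = A ^ 2 * B * B := by ring
      _ ≤ C * (C * exp (-(p * q / m))) := by gcongr
      _ = (C * exp (-(p * q / (2 * m)))) ^ 2 := by
          rw [mul_pow, sq (exp _), ← exp_add]
          ring_nf
  exact le_of_pow_le_pow_left₀ two_ne_zero (by positivity) hsq

/-- The Krawtchouk polynomial `K_q(x)` of the binary Hamming scheme of length `m`. -/
def krawtchouk (m q x : ℕ) : ℝ :=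
  ∑ k ∈ range (q + 1), (-1 : ℝ) ^ k * x.choose k * (m - x).choose (q - k)

theorem Fpqm_eq_krawtchouk_div (p q m : ℕ) : Fpqm p q m = krawtchouk m q p / m.choose q := rfl

theorem krawtchouk_eq_coeff (m q x : ℕ) :
    krawtchouk m q x = ((1 - X) ^ x * (1 + X) ^ (m - x) : ℝ[X]).coeff q := by
  rw [coeff_mul, Nat.sum_antidiagonal_eq_sum_range_succ_mk]
  simp only [coeff_one_sub_X_pow, coeff_one_add_X_pow]
  rfl

theorem krawtchouk_sub_right {m x : ℕ} (q : ℕ) (hx : x ≤ m) :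
    krawtchouk m q (m - x) = (-1) ^ q * krawtchouk m q x := by
  have : ((1 - X) ^ (m - x) * (1 + X) ^ x : ℝ[X]) =
      ((1 - X) ^ x * (1 + X) ^ (m - x) : ℝ[X]).comp (C (-1) * X) := by
    simp [sub_eq_add_neg, mul_comm]
  rw [krawtchouk_eq_coeff, krawtchouk_eq_coeff, Nat.sub_sub_self hx, this, comp_C_mul_X_coeff,
    mul_comm]

theorem krawtchouk_eq_sum_range_min (m q x : ℕ) :
    krawtchouk m q x =
      ∑ k ∈ range (min x q + 1), (-1 : ℝ) ^ k * x.choose k * (m - x).choose (q - k) := by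
  refine (sum_subset (range_subset_range.mpr (by omega)) fun k hkq hkx => ?_).symm
  rw [mem_range] at hkq hkx
  simp [Nat.choose_eq_zero_of_lt (show x < k by omega)]

theorem choose_mul_krawtchouk_comm (m p q : ℕ) :
    m.choose p * krawtchouk m q p = m.choose q * krawtchouk m p q := by
  rw [krawtchouk_eq_sum_range_min, krawtchouk_eq_sum_range_min, min_comm, mul_sum, mul_sum]
  refine sum_congr rfl fun k hk => ?_
  rw [mem_range] at hk
  have := Nat.choose_mul_choose_mul_choose_sub_comm (m := m) (show k ≤ p by omega)
    (show k ≤ q by omega)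
  calc (m.choose p : ℝ) * ((-1) ^ k * p.choose k * (m - p).choose (q - k))
      = (-1) ^ k * ((m.choose p * (p.choose k * (m - p).choose (q - k)) : ℕ) : ℝ) := by
        push_cast; ring
    _ = m.choose q * ((-1) ^ k * q.choose k * (m - q).choose (p - k)) := by
        rw [this]; push_cast; ring

theorem krawtchouk_eq_sum_range_div_two {m p : ℕ} (q : ℕ) (hp : 2 * p ≤ m) :
    krawtchouk m q p =
      ∑ j ∈ range (q / 2 + 1), (-1 : ℝ) ^ j * p.choose j * (m - 2 * p).choose (q - 2 * j) := by
  have : ((1 - X) ^ p * (1 + X) ^ (m - p) : ℝ[X]) = (1 - X ^ 2) ^ p * (1 + X) ^ (m - 2 * p) := by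
    rw [show m - p = p + (m - 2 * p) by omega, pow_add, ← mul_assoc, ← mul_pow]
    ring
  rw [krawtchouk_eq_coeff, this, coeff_mul, Nat.sum_antidiagonal_eq_sum_range_succ_mk]
  simp only [coeff_one_sub_X_sq_pow, coeff_one_add_X_pow, ite_mul, zero_mul]
  rw [sum_range_succ_ite_two_dvd]
  refine sum_congr rfl fun j _ => ?_
  rw [Nat.mul_div_cancel_left j two_pos]

theorem Fpqm_comm {p q m : ℕ} (hp : p ≤ m) (hq : q ≤ m) : Fpqm p q m = Fpqm q p m := by
  have hp' : (m.choose p : ℝ) ≠ 0 := by exact_mod_cast (Nat.choose_pos hp).ne'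
  have hq' : (m.choose q : ℝ) ≠ 0 := by exact_mod_cast (Nat.choose_pos hq).ne'
  rw [Fpqm_eq_krawtchouk_div, Fpqm_eq_krawtchouk_div, div_eq_div_iff hq' hp']
  linear_combination choose_mul_krawtchouk_comm m p q

theorem abs_Fpqm_sub_left {p m : ℕ} (q : ℕ) (hp : p ≤ m) : |Fpqm (m - p) q m| = |Fpqm p q m| := by
  rw [Fpqm_eq_krawtchouk_div, Fpqm_eq_krawtchouk_div, krawtchouk_sub_right q hp, mul_div_assoc,
    abs_mul, abs_pow, abs_neg, abs_one, one_pow, one_mul]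

theorem abs_Fpqm_sub_right {p q m : ℕ} (hp : p ≤ m) (hq : q ≤ m) :
    |Fpqm p (m - q) m| = |Fpqm p q m| := by
  rw [Fpqm_comm hp (Nat.sub_le m q), abs_Fpqm_sub_left p hq, Fpqm_comm hq hp]

theorem abs_Fpqm_eq_abs_Fpqm_min {p q m : ℕ} (hp : p ≤ m) (hq : q ≤ m) :
    |Fpqm p q m| = |Fpqm (min p (m - p)) (min q (m - q)) m| := by
  have hp' : |Fpqm p q m| = |Fpqm (min p (m - p)) q m| := by
    rcases le_total p (m - p) with h | h
    · rw [min_eq_left h]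
    · rw [min_eq_right h, abs_Fpqm_sub_left q hp]
  rcases le_total q (m - q) with h | h
  · rw [hp', min_eq_left h]
  · rw [hp', min_eq_right h, abs_Fpqm_sub_right (by omega) hq]

theorem abs_krawtchouk_le {m p q : ℕ} (hpq : p ≤ q) (hqm : 2 * q ≤ m) :
    |krawtchouk m q p| ≤ m.choose q * exp (-(p * q / (2 * m))) := by
  set b : ℕ → ℝ := fun j => ((p.choose j * (m - 2 * p).choose (q - 2 * j) : ℕ) : ℝ) with hb
  have hsum : krawtchouk m q p = ∑ j ∈ range (q / 2 + 1), (-1) ^ j * b j := by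
    rw [krawtchouk_eq_sum_range_div_two q (by omega)]
    refine sum_congr rfl fun j _ => ?_
    push_cast [hb]
    ring
  have hnonneg (i : ℕ) : 0 ≤ b i := Nat.cast_nonneg _
  have hlogConcave (i : ℕ) (hi : i + 2 ≤ q / 2) : b i * b (i + 2) ≤ b (i + 1) ^ 2 := by
    obtain ⟨t, ht⟩ : ∃ t, q - 2 * i = t + 4 := ⟨q - 2 * i - 4, by omega⟩
    simp only [hb]
    rw [ht, show q - 2 * (i + 1) = t + 2 by omega, show q - 2 * (i + 2) = t by omega]
    norm_cast
    calc p.choose i * (m - 2 * p).choose (t + 4) * (p.choose (i + 2) * (m - 2 * p).choose t)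
        = p.choose i * p.choose (i + 2) * ((m - 2 * p).choose t * (m - 2 * p).choose (t + 4)) := by
          ring
      _ ≤ p.choose (i + 1) ^ 2 * (m - 2 * p).choose (t + 2) ^ 2 :=
          Nat.mul_le_mul (Nat.choose_mul_choose_add_two_le p i)
            (Nat.choose_mul_choose_add_four_le (m - 2 * p) t)
      _ = (p.choose (i + 1) * (m - 2 * p).choose (t + 2)) ^ 2 := by ring
  have hsupp (i k l : ℕ) (hik : i ≤ k) (hkl : k ≤ l) (hl : l ≤ q / 2) (hi : b i ≠ 0)
      (hl' : b l ≠ 0) : b k ≠ 0 := by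
    simp only [hb, ne_eq, Nat.cast_eq_zero, mul_eq_zero, Nat.choose_eq_zero_iff, not_or,
      not_lt] at hi hl' ⊢
    omega
  obtain ⟨j₀, hj₀, hup, hdown⟩ := exists_unimodal_of_logConcave hnonneg hlogConcave hsupp
  calc |krawtchouk m q p| = |∑ j ∈ range (q / 2 + 1), (-1) ^ j * b j| := by rw [hsum]
    _ ≤ b j₀ := abs_sum_range_neg_one_pow_mul_le b hj₀ hnonneg hup hdown
    _ ≤ m.choose q * exp (-(p * q / (2 * m))) := by
        push_cast [hb]
        exact choose_mul_choose_le_choose_mul_exp hpq hqm (by omega)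

theorem abs_Fpqm_le_exp {p q m : ℕ} (hpq : p ≤ q) (hqm : 2 * q ≤ m) :
    |Fpqm p q m| ≤ exp (-(p * q / (2 * m))) := by
  have hC : (0 : ℝ) < m.choose q := by exact_mod_cast Nat.choose_pos (by omega)
  rw [Fpqm_eq_krawtchouk_div, abs_div, Nat.abs_cast, div_le_iff₀ hC, mul_comm]
  exact abs_krawtchouk_le hpq hqm

theorem stmt9_general (p q m : ℕ) (hp : p ≤ m) (hq : q ≤ m) :
    |Fpqm p q m| ≤
      Real.exp (-((min p (m - p) : ℝ) * (min q (m - q) : ℝ) / (2 * m))) := by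
  have hmin (x : ℕ) (hx : x ≤ m) : (min x (m - x) : ℝ) = (min x (m - x) : ℕ) := by
    rw [Nat.cast_min, Nat.cast_sub hx]
  rw [hmin p hp, hmin q hq, abs_Fpqm_eq_abs_Fpqm_min hp hq]
  rcases le_total (min p (m - p)) (min q (m - q)) with h | h
  · exact abs_Fpqm_le_exp h (by omega)
  · rw [Fpqm_comm (by omega) (by omega), mul_comm]
    exact abs_Fpqm_le_exp h (by omega)

theorem stmt9 (p q m : ℕ) (hm : 1 ≤ m) (hp : p ≤ m) (hq : q ≤ m) :
    |Fpqm p q m| ≤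
      Real.exp (-((min p (m - p) : ℝ) * (min q (m - q) : ℝ) / (2 * m))) :=
  stmt9_general p q m hp hq
end

section
/- Let q be an even integer with 2 ≤ q < n, and let H be the SYK Hamiltonian. For every integer k ≥ 1 there is a constant c_k, depending only on k and on the common distribution of the J_R (not on n or q), such that Var[L_n^{−1} Tr(H^k)] ≤ c_k · C(n,q)^{−1}. -/
open Matrix MeasureTheory ProbabilityTheory BigOperators
open scoped Classical

/-- Ordered product `Ψ_A = ψ_{i_1} ⋯ ψ_{i_m}` over a subset `A = {i_1 < ⋯ < i_m}`. -/
noncomputable def PsiProd {n : ℕ} {L : Type*} [Fintype L] [DecidableEq L]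
    (ψ : Fin n → Matrix L L ℂ) (A : Finset (Fin n)) : Matrix L L ℂ :=
  ((A.sort (· ≤ ·)).map ψ).prod

/-- The SYK Hamiltonian `H = i^{q/2} C(n,q)^{-1/2} Σ_R J_R Ψ_R`. -/
noncomputable def sykH (n q : ℕ) {Ω : Type}
    (ψ : Fin n → Matrix (Fin (2 ^ (n / 2))) (Fin (2 ^ (n / 2))) ℂ)
    (J : {A : Finset (Fin n) // A.card = q} → Ω → ℝ) (ω : Ω) :
    Matrix (Fin (2 ^ (n / 2))) (Fin (2 ^ (n / 2))) ℂ :=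
  (Complex.I ^ (q / 2) * ((Real.sqrt (n.choose q) : ℂ))⁻¹) •
    ∑ R : {A : Finset (Fin n) // A.card = q},
      (J R ω : ℂ) • PsiProd ψ (R : Finset (Fin n))

/-!
Expanding `H^k` over `k`-tuples `t` of index sets writes `L⁻¹ Tr H^k` as `∑ₜ Aₜ ∏ⱼ J_{tⱼ}`, so
its variance is `∑_{t,s} Re (Aₜ conj Aₛ) cov(∏ⱼ J_{tⱼ}, ∏ⱼ J_{sⱼ})`. Products of Majorana operators
are unitary, so `|Aₜ| ≤ C(n,q)^{-k/2}`; and `Aₜ = 0` unless every Majorana index occurs an even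
number of times in `t`, because otherwise conjugating by one `ψᵢ` flips the sign of the trace.
A covariance vanishes unless `t` and `s` share an index set and no index set occurs exactly once in
`(t, s)`. Such a pair is determined by its pattern of coincidences and its values at `k - 1`
positions: every value occurs at least twice, so if a value shared by `t` and `s` occurs at least
three times, `(t, s)` takes at most `k - 1` values; otherwise that value occurs exactly twice and is
recovered from the other coordinates of `t` by the parity constraint. Hence there are
`O(C(n,q)^{k-1})` such pairs.
-/

open Finset

theorem sum_pow_eq_sum_prod_ofFn {ι R : Type*} [Fintype ι] [Semiring R] (f : ι → R) (k : ℕ) :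
    (∑ i, f i) ^ k = ∑ t : Fin k → ι, (List.ofFn fun j => f (t j)).prod := by
  induction k with
  | zero => simp
  | succ k ih =>
    rw [pow_succ', ih, sum_mul_sum, ← Fintype.sum_prod_type',
      ← (Fin.consEquiv fun _ => ι).sum_comp]
    simp [Fin.consEquiv, List.ofFn_succ]

theorem List.prod_map_smul_eq_smul_prod {α R M : Type*} [CommMonoid R] [Monoid M] [MulAction R M]
    [IsScalarTower R M M] [SMulCommClass R M M] (l : List α) (c : α → R) (f : α → M) :
    (l.map fun a => c a • f a).prod = (l.map c).prod • (l.map f).prod := by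
  induction l with
  | nil => simp
  | cons a l ih => simp [ih, smul_mul_smul_comm]

theorem List.prod_ofFn_smul_eq_smul_prod {R M : Type*} [CommMonoid R] [Monoid M] [MulAction R M]
    [IsScalarTower R M M] [SMulCommClass R M M] {k : ℕ} (c : Fin k → R) (f : Fin k → M) :
    (List.ofFn fun j => c j • f j).prod = (∏ j, c j) • (List.ofFn f).prod := by
  simp only [List.ofFn_eq_map, List.prod_map_smul_eq_smul_prod, ← List.prod_ofFn]

theorem mul_list_prod_mul_of_mul_self {M : Type*} [Monoid M] {u : M} (hu : u * u = 1)
    (l : List M) : u * l.prod * u = (l.map fun x => u * x * u).prod := by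
  induction l with
  | nil => simpa using hu
  | cons x l ih =>
    rw [List.map_cons, List.prod_cons, List.prod_cons, ← ih]
    calc u * (x * l.prod) * u = u * x * (u * u) * l.prod * u := by simp [hu, mul_assoc]
      _ = u * x * u * (u * l.prod * u) := by simp only [mul_assoc]

theorem Finset.prod_map_sort {α M : Type*} [LinearOrder α] [CommMonoid M] (A : Finset α)
    (f : α → M) : ((A.sort (· ≤ ·)).map f).prod = ∏ a ∈ A, f a := by
  rw [← Multiset.prod_coe, ← Multiset.map_coe, Finset.sort_eq]
  rfl

def EvenCover {κ α : Type*} [Fintype κ] [DecidableEq α] (t : κ → Finset α) : Prop :=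
  ∀ a, Even #{j | a ∈ t j}

theorem EvenCover.eq_of_forall_ne {κ α : Type*} [Fintype κ] [DecidableEq α]
    {t t' : κ → Finset α} (ht : EvenCover t) (ht' : EvenCover t') {j₀ : κ}
    (h : ∀ j ≠ j₀, t j = t' j) : t = t' := by
  funext j
  by_cases hj : j = j₀
  swap
  · exact h j hj
  subst hj
  ext a
  have hsplit : ∀ u : κ → Finset α,
      #{j' | a ∈ u j'}
        = (if a ∈ u j then 1 else 0) + ∑ j' ∈ univ.erase j, if a ∈ u j' then 1 else 0 :=
    fun u => by rw [card_filter]; exact (add_sum_erase _ _ (mem_univ j)).symm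
  have hrest : ∑ j' ∈ univ.erase j, (if a ∈ t j' then 1 else 0)
      = ∑ j' ∈ univ.erase j, if a ∈ t' j' then 1 else 0 :=
    sum_congr rfl fun j' hj' => by rw [h j' (ne_of_mem_erase hj')]
  have h1 := ht a
  have h2 := ht' a
  rw [hsplit, hrest, Nat.even_add] at h1
  rw [hsplit, Nat.even_add] at h2
  have hiff := h1.trans h2.symm
  split_ifs at hiff <;> simp_all


def IsClifford {n : ℕ} {L : Type*} [Fintype L] [DecidableEq L] (ψ : Fin n → Matrix L L ℂ) :
    Prop :=
  ∀ i j, ψ i * ψ j + ψ j * ψ i = if i = j then (2 : ℂ) • (1 : Matrix L L ℂ) else 0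

namespace IsClifford

variable {n : ℕ} {L : Type*} [Fintype L] [DecidableEq L] {ψ : Fin n → Matrix L L ℂ}

theorem mul_self (h : IsClifford ψ) (i : Fin n) : ψ i * ψ i = 1 := by
  have h2 := h i i
  rw [if_pos rfl, ← two_smul ℂ] at h2
  exact smul_right_injective _ two_ne_zero h2

theorem mul_mul_self (h : IsClifford ψ) (i j : Fin n) :
    ψ i * ψ j * ψ i = (if i = j then 1 else -1 : ℂ) • ψ j := by
  by_cases hij : i = j
  · subst hij
    simp [h.mul_self]
  · have hanti : ψ i * ψ j = -(ψ j * ψ i) := by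
      simpa [hij] using eq_neg_of_add_eq_zero_left ((h i j).trans (if_neg hij))
    simp [hij, hanti, mul_assoc, h.mul_self]

theorem conj_psiProd (h : IsClifford ψ) (i : Fin n) (A : Finset (Fin n)) :
    ψ i * PsiProd ψ A * ψ i = ((-1) ^ #A * if i ∈ A then -1 else 1 : ℂ) • PsiProd ψ A := by
  have hsign : ∀ j, (if i = j then 1 else -1 : ℂ) = -1 * if i = j then -1 else 1 := by
    intro j; split_ifs <;> norm_num
  rw [PsiProd, mul_list_prod_mul_of_mul_self (h.mul_self i), List.map_map]
  simp only [Function.comp_def, h.mul_mul_self, List.prod_map_smul_eq_smul_prod,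
    Finset.prod_map_sort, hsign, prod_mul_distrib, prod_const, prod_ite_eq]

theorem conj_prod_psiProd (h : IsClifford ψ) (i : Fin n) {k : ℕ} (t : Fin k → Finset (Fin n))
    (ht : ∀ j, Even #(t j)) :
    ψ i * (List.ofFn fun j => PsiProd ψ (t j)).prod * ψ i
      = (-1 : ℂ) ^ #{j | i ∈ t j} • (List.ofFn fun j => PsiProd ψ (t j)).prod := by
  rw [mul_list_prod_mul_of_mul_self (h.mul_self i), List.map_ofFn]
  simp only [Function.comp_def, h.conj_psiProd, (ht _).neg_one_pow, one_mul,
    List.prod_ofFn_smul_eq_smul_prod, prod_ite, prod_const, one_pow, mul_one]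

theorem trace_prod_psiProd_eq_zero (h : IsClifford ψ) {k : ℕ} (t : Fin k → Finset (Fin n))
    (ht : ∀ j, Even #(t j)) (hcover : ¬ EvenCover t) :
    (List.ofFn fun j => PsiProd ψ (t j)).prod.trace = 0 := by
  simp only [EvenCover, not_forall, Nat.not_even_iff_odd] at hcover
  obtain ⟨i, hi⟩ := hcover
  set W := (List.ofFn fun j => PsiProd ψ (t j)).prod
  have hconj : (ψ i * W * ψ i).trace = W.trace := by
    rw [mul_assoc, trace_mul_comm, mul_assoc, h.mul_self, mul_one]
  rw [h.conj_prod_psiProd i t ht, hi.neg_one_pow, trace_smul, neg_one_smul] at hconj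
  exact CharZero.neg_eq_self_iff.mp hconj

theorem psiProd_mem_unitary (h : IsClifford ψ) (hherm : ∀ i, (ψ i).IsHermitian)
    (A : Finset (Fin n)) : PsiProd ψ A ∈ unitary (Matrix L L ℂ) := by
  refine list_prod_mem fun x hx => ?_
  obtain ⟨i, -, rfl⟩ := List.mem_map.mp hx
  have hself : star (ψ i) = ψ i := hherm i
  rw [Unitary.mem_iff, hself]
  exact ⟨h.mul_self i, h.mul_self i⟩

end IsClifford

theorem norm_trace_le_card_of_mem_unitary {L : Type*} [Fintype L] [DecidableEq L]
    {U : Matrix L L ℂ} (hU : U ∈ unitary (Matrix L L ℂ)) : ‖U.trace‖ ≤ Fintype.card L :=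
  calc ‖U.trace‖ ≤ ∑ i, ‖U i i‖ := norm_sum_le _ _
    _ ≤ ∑ _i : L, 1 := sum_le_sum fun i _ => entry_norm_bound_of_unitary hU i i
    _ = Fintype.card L := by simp

theorem card_le_of_exists_determining {α β γ : Type*} [Fintype β] [Fintype γ] [Nonempty γ]
    (s : Finset α) (f : α → β → γ) (m : ℕ)
    (h : ∀ a ∈ s, ∃ T : Finset β, #T ≤ m ∧ ∀ a' ∈ s,
      (∀ b b', f a' b = f a' b' ↔ f a b = f a b') → (∀ b ∈ T, f a' b = f a b) → a' = a) :
    #s ≤ 2 ^ (Fintype.card β * Fintype.card β + Fintype.card β) * Fintype.card γ ^ m := by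
  choose! T hTcard hT using h
  let key : α → (β → β → Bool) × Finset β := fun a => (fun b b' => f a b = f a b', T a)
  have hfiber : ∀ c, #{a ∈ s | key a = c} ≤ Fintype.card γ ^ m := by
    intro c
    rcases eq_empty_or_nonempty {a ∈ s | key a = c} with hc | ⟨a₀, ha₀⟩
    · simp [hc]
    obtain ⟨ha₀s, rfl⟩ := mem_filter.mp ha₀
    calc #{a ∈ s | key a = key a₀}
        ≤ #(univ : Finset (T a₀ → γ)) := by
          refine card_le_card_of_injOn (fun a (b : T a₀) => f a b) (fun _ _ => mem_univ _) ?_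
          intro a ha a' ha' heq
          obtain ⟨has, hka⟩ := mem_filter.mp ha
          obtain ⟨ha's, hka'⟩ := mem_filter.mp ha'
          refine hT a' ha's a has (fun b b' => ?_) (fun b hb => ?_)
          · simpa [key] using congrFun (congrFun (congrArg Prod.fst (hka.trans hka'.symm)) b) b'
          · have hTa' : T a' = T a₀ := congrArg Prod.snd hka'
            exact congrFun heq ⟨b, hTa' ▸ hb⟩
      _ = Fintype.card γ ^ #(T a₀) := by simp
      _ ≤ Fintype.card γ ^ m := pow_le_pow_right₀ Fintype.card_pos (hTcard a₀ ha₀s)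
  calc #s = ∑ c, #{a ∈ s | key a = c} := card_eq_sum_card_fiberwise fun _ _ => mem_univ _
    _ ≤ ∑ _c : (β → β → Bool) × Finset β, Fintype.card γ ^ m := sum_le_sum fun c _ => hfiber c
    _ = 2 ^ (Fintype.card β * Fintype.card β + Fintype.card β) * Fintype.card γ ^ m := by
      simp [pow_add, pow_mul]

theorem exists_transversal {β γ : Type*} [Fintype β] [DecidableEq β] [DecidableEq γ]
    (u : β → γ) (b₀ : β) :
    ∃ T : Finset β, b₀ ∈ T ∧ #T = #(univ.image u) ∧ ∀ b, ∃ b' ∈ T, u b' = u b := by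
  have : Nonempty β := ⟨b₀⟩
  let r : γ → β := fun c => if c = u b₀ then b₀ else Function.invFun u c
  have hr : ∀ b, u (r (u b)) = u b := by
    intro b
    by_cases hb : u b = u b₀
    · simp [r, hb]
    · simp only [r, if_neg hb]
      exact Function.invFun_eq ⟨b, rfl⟩
  refine ⟨(univ.image u).image r, ?_, ?_, fun b => ⟨r (u b), ?_, hr b⟩⟩
  · exact mem_image.mpr ⟨u b₀, mem_image_of_mem _ (mem_univ _), by simp [r]⟩
  · refine card_image_of_injOn fun c hc c' hc' hcc' => ?_
    obtain ⟨b, -, rfl⟩ := mem_image.mp hc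
    obtain ⟨b', -, rfl⟩ := mem_image.mp hc'
    rw [← hr b, ← hr b', hcc']
  · exact mem_image_of_mem _ (mem_image_of_mem _ (mem_univ _))

theorem card_fiber_add_two_mul_card_erase_image_le {β γ : Type*} [Fintype β] [DecidableEq γ]
    (u : β → γ) (hu : ∀ c, #{b | u b = c} ≠ 1) (b₀ : β) :
    #{b | u b = u b₀} + 2 * #((univ.image u).erase (u b₀)) ≤ Fintype.card β := by
  have hge : ∀ c ∈ (univ.image u).erase (u b₀), 2 ≤ #{b | u b = c} := by
    intro c hc
    obtain ⟨b, -, rfl⟩ := mem_image.mp (mem_of_mem_erase hc)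
    have : 0 < #{b' | u b' = u b} := card_pos.mpr ⟨b, by simp⟩
    have := hu (u b)
    omega
  calc #{b | u b = u b₀} + 2 * #((univ.image u).erase (u b₀))
      ≤ #{b | u b = u b₀} + ∑ c ∈ (univ.image u).erase (u b₀), #{b | u b = c} := by
        have := card_nsmul_le_sum _ _ 2 hge
        rw [smul_eq_mul, mul_comm] at this
        omega
    _ = ∑ c ∈ univ.image u, #{b | u b = c} :=
        add_sum_erase _ (fun c => #{b | u b = c}) (mem_image_of_mem _ (mem_univ b₀))
    _ = Fintype.card β := (card_eq_sum_card_image u univ).symm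

theorem apply_eq_of_forall_iff_of_eqOn {β γ : Type*} {u u' : β → γ}
    (hker : ∀ b b', u' b = u' b' ↔ u b = u b')
    {T : Finset β} (hT : ∀ b ∈ T, u' b = u b) {b b' : β} (hb' : b' ∈ T) (h : u b' = u b) :
    u' b = u b :=
  calc u' b = u' b' := (hker b b').mpr h.symm
    _ = u b' := hT b' hb'
    _ = u b := h

theorem card_filter_sum_elim_eq {κ κ' γ : Type*} [Fintype κ] [Fintype κ'] [DecidableEq γ]
    (t : κ → γ) (s : κ' → γ) (c : γ) :
    #{p | Sum.elim t s p = c} = #{i | t i = c} + #{j | s j = c} := by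
  simp only [card_filter, Fintype.sum_sum_type, Sum.elim_inl, Sum.elim_inr]
  rfl

theorem eq_of_eqOn_of_levelSet_eq_pair {ι : Type*} {k : ℕ} {G : Set (Fin k → ι)}
    (hG : ∀ t ∈ G, ∀ t' ∈ G, ∀ j₀, (∀ j ≠ j₀, t j = t' j) → t = t')
    {t s t' s' : Fin k → ι} (ht : t ∈ G) (ht' : t' ∈ G) {i j : Fin k} (hij : t i = s j)
    (hpair : ∀ p, Sum.elim t s p = t i → p = .inl i ∨ p = .inr j) (hcross : s' j = t' i)
    (hoff : ∀ p, Sum.elim t s p ≠ t i → Sum.elim t' s' p = Sum.elim t s p) :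
    (t', s') = (t, s) := by
  have ht't : t' = t := hG t' ht' t ht i fun x hx =>
    hoff (.inl x) fun h => by simpa [hx] using hpair _ h
  refine Prod.ext ht't (funext fun y => ?_)
  by_cases hy : y = j
  · subst hy
    simp [hcross, ht't, hij]
  · exact hoff (.inr y) fun h => by simpa [hy] using hpair _ h

section ContributingPairs

variable {ι : Type*} [Fintype ι] [DecidableEq ι] {k : ℕ}

noncomputable def contributingPairs (G : Set (Fin k → ι)) : Finset ((Fin k → ι) × (Fin k → ι)) :=
  {ts | ts.1 ∈ G ∧ ts.2 ∈ G ∧ (∃ i j, ts.1 i = ts.2 j) ∧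
    ∀ R, #{p | Sum.elim ts.1 ts.2 p = R} ≠ 1}

theorem exists_determining_of_mem_contributingPairs {G : Set (Fin k → ι)}
    (hG : ∀ t ∈ G, ∀ t' ∈ G, ∀ j₀, (∀ j ≠ j₀, t j = t' j) → t = t')
    {ts : (Fin k → ι) × (Fin k → ι)} (hts : ts ∈ contributingPairs G) :
    ∃ T : Finset (Fin k ⊕ Fin k), #T ≤ k - 1 ∧ ∀ ts' ∈ contributingPairs G,
      (∀ p p', Sum.elim ts'.1 ts'.2 p = Sum.elim ts'.1 ts'.2 p' ↔
        Sum.elim ts.1 ts.2 p = Sum.elim ts.1 ts.2 p') →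
      (∀ p ∈ T, Sum.elim ts'.1 ts'.2 p = Sum.elim ts.1 ts.2 p) → ts' = ts := by
  obtain ⟨t, s⟩ := ts
  simp only [contributingPairs, mem_filter, mem_univ, true_and] at hts
  obtain ⟨ht, -, ⟨i, j, hij⟩, hmult⟩ := hts
  set u := Sum.elim t s
  obtain ⟨T, hiT, hTcard, hTrep⟩ := exists_transversal u (.inl i)
  have hcount := card_fiber_add_two_mul_card_erase_image_le u hmult (.inl i)
  have himage := card_erase_add_one (mem_image_of_mem u (mem_univ (Sum.inl i)))
  simp only [Fintype.card_sum, Fintype.card_fin] at hcount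
  set F : Finset (Fin k ⊕ Fin k) := {p | u p = u (.inl i)} with hF
  have hpos : 0 < #F := card_pos.mpr ⟨.inl i, by simp [hF]⟩
  by_cases hbig : 3 ≤ #F
  · refine ⟨T, by omega, fun ts' _ hker hagree => ?_⟩
    have hall : ∀ p, Sum.elim ts'.1 ts'.2 p = u p := fun p => by
      obtain ⟨p', hp'T, hp'⟩ := hTrep p
      exact apply_eq_of_forall_iff_of_eqOn hker hagree hp'T hp'
    exact Prod.ext (funext fun x => hall (.inl x)) (funext fun y => hall (.inr y))
  have hsub : ({.inl i, .inr j} : Finset (Fin k ⊕ Fin k)) ⊆ F := by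
    intro p hp
    rcases mem_insert.mp hp with rfl | hp
    · simp [hF]
    · rw [mem_singleton.mp hp]; simp [hF, u, hij]
  have hfiber : F = {.inl i, .inr j} :=
    (eq_of_subset_of_card_le hsub (by rw [card_pair (by simp)]; omega)).symm
  refine ⟨T.erase (.inl i), by rw [card_erase_of_mem hiT]; omega,
    fun ⟨t', s'⟩ hts' hker hagree => ?_⟩
  simp only [contributingPairs, mem_filter, mem_univ, true_and] at hts'
  refine eq_of_eqOn_of_levelSet_eq_pair hG ht hts'.1 hij (fun p hp => ?_)
    ((hker (.inr j) (.inl i)).mpr (by simp [u, hij])) (fun p hp => ?_)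
  · have hpF : p ∈ F := mem_filter.mpr ⟨mem_univ _, hp⟩
    simpa [hfiber] using hpF
  · obtain ⟨p', hp'T, hp'⟩ := hTrep p
    refine apply_eq_of_forall_iff_of_eqOn hker hagree (mem_erase.mpr ⟨?_, hp'T⟩) hp'
    rintro rfl
    exact hp (by simpa [u] using hp'.symm)

theorem card_mul_card_contributingPairs_le [Nonempty ι] {G : Set (Fin k → ι)}
    (hG : ∀ t ∈ G, ∀ t' ∈ G, ∀ j₀, (∀ j ≠ j₀, t j = t' j) → t = t') :
    Fintype.card ι * #(contributingPairs G)
      ≤ 2 ^ ((k + k) * (k + k) + (k + k)) * Fintype.card ι ^ k := by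
  rcases (contributingPairs G).eq_empty_or_nonempty with hempty | ⟨ts, hts⟩
  · simp [hempty]
  have hk : k ≠ 0 := by
    simp only [contributingPairs, mem_filter] at hts
    obtain ⟨i, -⟩ := hts.2.2.2.1
    exact i.pos.ne'
  have hcard := card_le_of_exists_determining (contributingPairs G)
    (fun ts => Sum.elim ts.1 ts.2) (k - 1)
    fun ts hts => exists_determining_of_mem_contributingPairs hG hts
  simp only [Fintype.card_sum, Fintype.card_fin] at hcard
  calc Fintype.card ι * #(contributingPairs G)
      ≤ Fintype.card ι * (2 ^ ((k + k) * (k + k) + (k + k)) * Fintype.card ι ^ (k - 1)) :=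
        Nat.mul_le_mul_left _ hcard
    _ = 2 ^ ((k + k) * (k + k) + (k + k)) * Fintype.card ι ^ k := by
        rw [mul_left_comm, mul_pow_sub_one hk]

end ContributingPairs

structure IsIIDWithLaw {Ω ι : Type*} [MeasurableSpace Ω] (J : ι → Ω → ℝ) (P : Measure Ω)
    (μ : Measure ℝ) : Prop where
  measurable : ∀ R, Measurable (J R)
  map_eq : ∀ R, P.map (J R) = μ
  iIndepFun : iIndepFun J P

theorem abs_integral_pow_le {μ : Measure ℝ} [IsProbabilityMeasure μ]
    (hmom : ∀ m : ℕ, Integrable (fun x => |x| ^ m) μ) {e m : ℕ} (he : e ≤ m) :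
    |∫ x, x ^ e ∂μ| ≤ (1 + ∫ x, |x| ^ m ∂μ) ^ e := by
  rcases eq_or_ne e 0 with rfl | he0
  · simp
  have hM : 0 ≤ ∫ x, |x| ^ m ∂μ := integral_nonneg fun x => by positivity
  have hpt : ∀ x : ℝ, |x| ^ e ≤ 1 + |x| ^ m := fun x => by
    rcases le_or_gt |x| 1 with h | h
    · have h1 : |x| ^ e ≤ 1 := pow_le_one₀ (abs_nonneg x) h
      have h2 : 0 ≤ |x| ^ m := by positivity
      linarith
    · linarith [pow_le_pow_right₀ h.le he]
  calc |∫ x, x ^ e ∂μ| ≤ ∫ x, |x| ^ e ∂μ := by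
        simpa only [abs_pow] using abs_integral_le_integral_abs (f := fun x : ℝ => x ^ e)
    _ ≤ ∫ x, (1 + |x| ^ m) ∂μ := integral_mono (hmom e) ((integrable_const 1).add (hmom m)) hpt
    _ = 1 + ∫ x, |x| ^ m ∂μ := by rw [integral_add (integrable_const 1) (hmom m)]; simp
    _ ≤ (1 + ∫ x, |x| ^ m ∂μ) ^ e := le_self_pow₀ (by linarith) he0

namespace IsIIDWithLaw

variable {Ω ι : Type*} [MeasurableSpace Ω] {P : Measure Ω} {μ : Measure ℝ} {J : ι → Ω → ℝ}

theorem memLp (hJ : IsIIDWithLaw J P μ) (hmom : ∀ m : ℕ, Integrable (fun x => |x| ^ m) μ)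
    (R : ι) (m : ℕ) : MemLp (J R) m P := by
  have hid : MemLp id m μ := by
    rcases eq_or_ne m 0 with rfl | hm
    · simpa using aestronglyMeasurable_id
    exact (integrable_norm_rpow_iff aestronglyMeasurable_id (by simpa) (by simp)).1
      (by simpa using hmom m)
  rw [← hJ.map_eq R] at hid
  exact (memLp_map_measure_iff hid.aestronglyMeasurable (hJ.measurable R).aemeasurable).1 hid

theorem memLp_prod [IsProbabilityMeasure P] (hJ : IsIIDWithLaw J P μ)
    (hmom : ∀ m : ℕ, Integrable (fun x => |x| ^ m) μ) {κ : Type*} [Fintype κ] (v : κ → ι)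
    (m : ℕ) : MemLp (fun ω => ∏ i, J (v i) ω) m P := by
  -- Hölder: a product of `card κ` functions in `L^(m * card κ)` lies in `L^m`
  refine (MemLp.prod' (s := univ) fun i _ =>
    hJ.memLp hmom (v i) (m * Fintype.card κ)).mono_exponent ?_
  rcases eq_or_ne (Fintype.card κ) 0 with hκ | hκ
  · simp [hκ]
  rcases eq_or_ne m 0 with rfl | hm
  · simp
  simp only [sum_const, card_univ, nsmul_eq_mul, Nat.cast_mul]
  rw [ENNReal.mul_inv (.inl (by simpa)) (.inl (ENNReal.natCast_ne_top _)), inv_inv,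
    mul_comm (m : ENNReal), ← mul_assoc,
    ENNReal.inv_mul_cancel (by simpa) (ENNReal.natCast_ne_top _), one_mul]

theorem covariance_prod_eq_sub [IsProbabilityMeasure P] (hJ : IsIIDWithLaw J P μ)
    (hmom : ∀ m : ℕ, Integrable (fun x => |x| ^ m) μ) {κ κ' : Type*} [Fintype κ] [Fintype κ']
    (t : κ → ι) (s : κ' → ι) :
    cov[fun ω => ∏ i, J (t i) ω, fun ω => ∏ j, J (s j) ω; P]
      = ∫ ω, ∏ p, J (Sum.elim t s p) ω ∂P
        - (∫ ω, ∏ i, J (t i) ω ∂P) * ∫ ω, ∏ j, J (s j) ω ∂P := by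
  rw [covariance_eq_sub (hJ.memLp_prod hmom t 2) (hJ.memLp_prod hmom s 2)]
  simp [Fintype.prod_sum_type]

variable [Fintype ι] [DecidableEq ι]

theorem integral_prod (hJ : IsIIDWithLaw J P μ) {κ : Type*} [Fintype κ] (v : κ → ι) :
    ∫ ω, ∏ i, J (v i) ω ∂P = ∏ R, ∫ x, x ^ #{i | v i = R} ∂μ := by
  have hfiber : ∀ ω, ∏ i, J (v i) ω = ∏ R, J R ω ^ #{i | v i = R} := fun ω => by
    rw [← prod_fiberwise' univ v (fun R => J R ω)]
    simp [prod_const]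
  simp_rw [hfiber]
  rw [hJ.iIndepFun.integral_fun_prod_comp (f := fun R x => x ^ #{i | v i = R})
    (fun R => (hJ.measurable R).aemeasurable) (fun R => by fun_prop)]
  refine prod_congr rfl fun R _ => ?_
  rw [← hJ.map_eq R, integral_map (hJ.measurable R).aemeasurable (by fun_prop)]

theorem abs_integral_prod_le [IsProbabilityMeasure μ] (hJ : IsIIDWithLaw J P μ)
    (hmom : ∀ m : ℕ, Integrable (fun x => |x| ^ m) μ) {κ : Type*} [Fintype κ] (v : κ → ι)
    {m : ℕ} (hm : Fintype.card κ ≤ m) :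
    |∫ ω, ∏ i, J (v i) ω ∂P| ≤ (1 + ∫ x, |x| ^ m ∂μ) ^ Fintype.card κ := by
  rw [hJ.integral_prod, abs_prod]
  calc ∏ R, |∫ x, x ^ #{i | v i = R} ∂μ| ≤ ∏ R, (1 + ∫ x, |x| ^ m ∂μ) ^ #{i | v i = R} :=
        prod_le_prod (fun _ _ => abs_nonneg _) fun R _ =>
          abs_integral_pow_le hmom ((card_filter_le _ _).trans (by simpa using hm))
    _ = (1 + ∫ x, |x| ^ m ∂μ) ^ Fintype.card κ := by
        rw [prod_pow_eq_pow_sum, ← card_eq_sum_card_fiberwise fun _ _ => mem_univ _, card_univ]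

section Covariance

variable [IsProbabilityMeasure P] (hJ : IsIIDWithLaw J P μ)
  (hmom : ∀ m : ℕ, Integrable (fun x => |x| ^ m) μ) {κ κ' : Type*} [Fintype κ] [Fintype κ']
  (t : κ → ι) (s : κ' → ι)
include hJ hmom

theorem covariance_prod_eq_zero_of_disjoint [IsProbabilityMeasure μ]
    (hdisj : ∀ i j, t i ≠ s j) :
    cov[fun ω => ∏ i, J (t i) ω, fun ω => ∏ j, J (s j) ω; P] = 0 := by
  rw [hJ.covariance_prod_eq_sub hmom, hJ.integral_prod, hJ.integral_prod, hJ.integral_prod,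
    sub_eq_zero, ← prod_mul_distrib]
  refine prod_congr rfl fun R _ => ?_
  rw [card_filter_sum_elim_eq]
  by_cases ht : #{i | t i = R} = 0
  · simp [ht]
  have hs : #{j | s j = R} = 0 := by
    obtain ⟨i, hi⟩ := card_ne_zero.mp ht
    rw [card_eq_zero, filter_eq_empty_iff]
    exact fun j _ hj => hdisj i j ((mem_filter.mp hi).2.trans hj.symm)
  simp [hs]

theorem covariance_prod_eq_zero_of_card_eq_one (hmean : ∫ x, x ∂μ = 0) {R : ι}
    (h : #{p | Sum.elim t s p = R} = 1) :
    cov[fun ω => ∏ i, J (t i) ω, fun ω => ∏ j, J (s j) ω; P] = 0 := by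
  have hfirst : ∀ e, e = 1 → ∫ x, x ^ e ∂μ = 0 := by rintro _ rfl; simpa using hmean
  rw [hJ.covariance_prod_eq_sub hmom, hJ.integral_prod, hJ.integral_prod, hJ.integral_prod,
    prod_eq_zero (mem_univ R) (hfirst _ h)]
  rw [card_filter_sum_elim_eq] at h
  rcases Nat.add_eq_one_iff.mp h with ⟨-, hs⟩ | ⟨ht, -⟩
  · rw [prod_eq_zero (f := fun R => ∫ x, x ^ #{j | s j = R} ∂μ) (mem_univ R) (hfirst _ hs)]
    simp
  · rw [prod_eq_zero (f := fun R => ∫ x, x ^ #{i | t i = R} ∂μ) (mem_univ R) (hfirst _ ht)]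
    simp

theorem abs_covariance_prod_le [IsProbabilityMeasure μ] :
    |cov[fun ω => ∏ i, J (t i) ω, fun ω => ∏ j, J (s j) ω; P]|
      ≤ 2 * (1 + ∫ x, |x| ^ (Fintype.card κ + Fintype.card κ') ∂μ)
        ^ (Fintype.card κ + Fintype.card κ') := by
  set m := Fintype.card κ + Fintype.card κ'
  have hjoint := hJ.abs_integral_prod_le hmom (Sum.elim t s) (m := m) (by simp [m])
  have ht := hJ.abs_integral_prod_le hmom t (m := m) (by omega)
  have hs := hJ.abs_integral_prod_le hmom s (m := m) (by omega)
  rw [Fintype.card_sum] at hjoint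
  rw [hJ.covariance_prod_eq_sub hmom]
  calc _ ≤ |∫ ω, ∏ p, J (Sum.elim t s p) ω ∂P|
        + |∫ ω, ∏ i, J (t i) ω ∂P| * |∫ ω, ∏ j, J (s j) ω ∂P| := by
        rw [← abs_mul]; exact abs_sub _ _
    _ ≤ (1 + ∫ x, |x| ^ m ∂μ) ^ m
        + (1 + ∫ x, |x| ^ m ∂μ) ^ Fintype.card κ
          * (1 + ∫ x, |x| ^ m ∂μ) ^ Fintype.card κ' := by
        gcongr
    _ = 2 * (1 + ∫ x, |x| ^ m ∂μ) ^ m := by rw [← pow_add]; ring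

end Covariance

end IsIIDWithLaw

theorem norm_sum_mul_ofReal_sq {κ : Type*} [Fintype κ] (A : κ → ℂ) (y : κ → ℝ) :
    ‖∑ t, A t * y t‖ ^ 2 = ∑ t, ∑ s, (A t * starRingEnd ℂ (A s)).re * (y t * y s) := by
  calc ‖∑ t, A t * y t‖ ^ 2 = ((∑ t, A t * y t) * starRingEnd ℂ (∑ t, A t * y t)).re := by
        rw [Complex.mul_conj, Complex.ofReal_re, Complex.sq_norm]
    _ = _ := by
        rw [map_sum, sum_mul_sum, Complex.re_sum]
        refine sum_congr rfl fun t _ => ?_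
        rw [Complex.re_sum]
        refine sum_congr rfl fun s _ => ?_
        rw [map_mul, Complex.conj_ofReal, ← Complex.re_mul_ofReal]
        push_cast
        ring_nf

theorem integral_norm_sum_sub_integral_sq {Ω : Type*} [MeasurableSpace Ω] {P : Measure Ω}
    [IsProbabilityMeasure P] {κ : Type*} [Fintype κ] (A : κ → ℂ) (X : κ → Ω → ℝ)
    (hX : ∀ t, MemLp (X t) 2 P) :
    ∫ ω, ‖∑ t, A t * X t ω - ∫ ω', ∑ t, A t * X t ω' ∂P‖ ^ 2 ∂P
      = ∑ t, ∑ s, (A t * starRingEnd ℂ (A s)).re * cov[X t, X s; P] := by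
  have hmean : ∫ ω', ∑ t, A t * X t ω' ∂P = ∑ t, A t * (∫ ω, X t ω ∂P : ℝ) := by
    rw [integral_finsetSum _ fun t _ => ((hX t).integrable one_le_two).ofReal.const_mul _]
    exact sum_congr rfl fun t _ => by rw [integral_const_mul, integral_complex_ofReal]
  have hcentered : ∀ ω, ∑ t, A t * X t ω - ∑ t, A t * (∫ ω, X t ω ∂P : ℝ)
      = ∑ t, A t * (X t ω - ∫ ω, X t ω ∂P : ℝ) := fun ω => by
    rw [← sum_sub_distrib]; push_cast; simp only [mul_sub]
  have hint : ∀ t s, Integrable (fun ω => (X t ω - ∫ ω, X t ω ∂P) * (X s ω - ∫ ω, X s ω ∂P)) P :=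
    fun t s => ((hX t).sub (memLp_const _)).integrable_mul ((hX s).sub (memLp_const _))
  simp_rw [hmean, hcentered, norm_sum_mul_ofReal_sq]
  rw [integral_finsetSum _ fun t _ => integrable_finsetSum _ fun s _ => (hint t s).const_mul _]
  refine sum_congr rfl fun t _ => ?_
  rw [integral_finsetSum _ fun s _ => (hint t s).const_mul _]
  exact sum_congr rfl fun s _ => integral_const_mul _ _

theorem re_mul_covariance_prod_le {Ω ι : Type*} [MeasurableSpace Ω] {P : Measure Ω}
    [IsProbabilityMeasure P] {μ : Measure ℝ} [IsProbabilityMeasure μ] [Fintype ι] [DecidableEq ι]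
    {J : ι → Ω → ℝ} (hJ : IsIIDWithLaw J P μ) (hmean : ∫ x, x ∂μ = 0)
    (hmom : ∀ m : ℕ, Integrable (fun x => |x| ^ m) μ) {k : ℕ} {G : Set (Fin k → ι)}
    {A : (Fin k → ι) → ℂ} (hA0 : ∀ t ∉ G, A t = 0) {a : ℝ} (hA : ∀ t, ‖A t‖ ≤ a)
    (t s : Fin k → ι) :
    (A t * starRingEnd ℂ (A s)).re * cov[fun ω => ∏ j, J (t j) ω, fun ω => ∏ j, J (s j) ω; P]
      ≤ if (t, s) ∈ contributingPairs G
        then a ^ 2 * (2 * (1 + ∫ x, |x| ^ (k + k) ∂μ) ^ (k + k)) else 0 := by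
  split_ifs with hts
  · have hcov := hJ.abs_covariance_prod_le hmom t s
    simp only [Fintype.card_fin] at hcov
    calc _ ≤ |(A t * starRingEnd ℂ (A s)).re|
          * |cov[fun ω => ∏ j, J (t j) ω, fun ω => ∏ j, J (s j) ω; P]| :=
          (le_abs_self _).trans_eq (abs_mul _ _)
      _ ≤ (‖A t‖ * ‖A s‖) * (2 * (1 + ∫ x, |x| ^ (k + k) ∂μ) ^ (k + k)) := by
          gcongr
          simpa using Complex.abs_re_le_norm (A t * starRingEnd ℂ (A s))
      _ ≤ (a * a) * (2 * (1 + ∫ x, |x| ^ (k + k) ∂μ) ^ (k + k)) := by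
          have hM : 0 ≤ ∫ x, |x| ^ (k + k) ∂μ := integral_nonneg fun x => by positivity
          gcongr
          exacts [(norm_nonneg _).trans (hA t), hA t, hA s]
      _ = _ := by ring
  simp only [contributingPairs, mem_filter, mem_univ, true_and, not_and, not_forall,
    not_not] at hts
  by_cases ht : t ∈ G
  swap
  · simp [hA0 t ht]
  by_cases hs : s ∈ G
  swap
  · simp [hA0 s hs]
  by_cases hcross : ∃ i j, t i = s j
  · obtain ⟨R, hR⟩ := hts ht hs hcross
    rw [hJ.covariance_prod_eq_zero_of_card_eq_one hmom t s hmean hR, mul_zero]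
  · simp only [not_exists] at hcross
    rw [hJ.covariance_prod_eq_zero_of_disjoint hmom t s hcross, mul_zero]

-- the number of keys in `card_le_of_exists_determining` times the bound on each covariance
noncomputable def varianceConst (μ : Measure ℝ) (k : ℕ) : ℝ :=
  2 ^ ((k + k) * (k + k) + (k + k)) * (2 * (1 + ∫ x, |x| ^ (k + k) ∂μ) ^ (k + k))

theorem integral_norm_sum_sub_integral_sq_le {Ω ι : Type*} [MeasurableSpace Ω] {P : Measure Ω}
    [IsProbabilityMeasure P] {μ : Measure ℝ} [IsProbabilityMeasure μ] [Fintype ι] [DecidableEq ι]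
    [Nonempty ι] {J : ι → Ω → ℝ} (hJ : IsIIDWithLaw J P μ) (hmean : ∫ x, x ∂μ = 0)
    (hmom : ∀ m : ℕ, Integrable (fun x => |x| ^ m) μ) {k : ℕ} {G : Set (Fin k → ι)}
    (hG : ∀ t ∈ G, ∀ t' ∈ G, ∀ j₀, (∀ j ≠ j₀, t j = t' j) → t = t')
    (A : (Fin k → ι) → ℂ) (hA0 : ∀ t ∉ G, A t = 0) {a : ℝ} (hA : ∀ t, ‖A t‖ ≤ a) :
    ∫ ω, ‖∑ t, A t * (∏ j, J (t j) ω : ℝ) - ∫ ω', ∑ t, A t * (∏ j, J (t j) ω' : ℝ) ∂P‖ ^ 2 ∂P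
      ≤ varianceConst μ k * a ^ 2 * Fintype.card ι ^ k / Fintype.card ι := by
  set B := 2 * (1 + ∫ x, |x| ^ (k + k) ∂μ) ^ (k + k)
  have hB : 0 ≤ B := by
    have : 0 ≤ ∫ x, |x| ^ (k + k) ∂μ := integral_nonneg fun x => by positivity
    positivity
  have hcount : (#(contributingPairs G) : ℝ)
      ≤ 2 ^ ((k + k) * (k + k) + (k + k)) * Fintype.card ι ^ k / Fintype.card ι := by
    rw [le_div_iff₀ (by exact_mod_cast Fintype.card_pos), mul_comm]
    exact_mod_cast card_mul_card_contributingPairs_le hG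
  rw [integral_norm_sum_sub_integral_sq A _ fun t => hJ.memLp_prod hmom t 2]
  calc _ ≤ ∑ t, ∑ s, if (t, s) ∈ contributingPairs G then a ^ 2 * B else 0 :=
        sum_le_sum fun t _ => sum_le_sum fun s _ =>
          re_mul_covariance_prod_le hJ hmean hmom hA0 hA t s
    _ = #(contributingPairs G) * (a ^ 2 * B) := by
        rw [← Fintype.sum_prod_type'
            (f := fun t s => if (t, s) ∈ contributingPairs G then a ^ 2 * B else 0),
          sum_ite_mem, univ_inter, sum_const, nsmul_eq_mul]
    _ ≤ 2 ^ ((k + k) * (k + k) + (k + k)) * Fintype.card ι ^ k / Fintype.card ι * (a ^ 2 * B) := by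
        gcongr
    _ = varianceConst μ k * a ^ 2 * Fintype.card ι ^ k / Fintype.card ι := by
        unfold varianceConst; ring

noncomputable def sykCoeff (n q : ℕ) (ψ : Fin n → Matrix (Fin (2 ^ (n / 2))) (Fin (2 ^ (n / 2))) ℂ)
    {k : ℕ} (t : Fin k → {A : Finset (Fin n) // A.card = q}) : ℂ :=
  ((2 : ℂ) ^ (n / 2))⁻¹ * (Complex.I ^ (q / 2) * ((Real.sqrt (n.choose q) : ℂ))⁻¹) ^ k *
    (List.ofFn fun j => PsiProd ψ (t j : Finset (Fin n))).prod.trace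

section SYK

variable {n q : ℕ} {ψ : Fin n → Matrix (Fin (2 ^ (n / 2))) (Fin (2 ^ (n / 2))) ℂ}

theorem inv_mul_trace_sykH_pow_eq_sum {Ω : Type} (J : {A : Finset (Fin n) // A.card = q} → Ω → ℝ)
    (k : ℕ) (ω : Ω) :
    ((2 : ℂ) ^ (n / 2))⁻¹ * ((sykH n q ψ J ω) ^ k).trace
      = ∑ t : Fin k → {A : Finset (Fin n) // A.card = q},
          sykCoeff n q ψ t * (∏ j, J (t j) ω : ℝ) := by
  rw [sykH, smul_pow, trace_smul, sum_pow_eq_sum_prod_ofFn, trace_sum, smul_eq_mul, mul_sum,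
    mul_sum]
  refine sum_congr rfl fun t _ => ?_
  rw [List.prod_ofFn_smul_eq_smul_prod, trace_smul, smul_eq_mul, sykCoeff]
  push_cast
  ring

theorem norm_sykCoeff_le (hψ : IsClifford ψ) (hherm : ∀ i, (ψ i).IsHermitian) {k : ℕ}
    (t : Fin k → {A : Finset (Fin n) // A.card = q}) :
    ‖sykCoeff n q ψ t‖ ≤ (Real.sqrt (n.choose q))⁻¹ ^ k := by
  have htr := norm_trace_le_card_of_mem_unitary (list_prod_mem fun x hx => by
    obtain ⟨j, rfl⟩ := List.mem_ofFn.mp hx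
    exact hψ.psiProd_mem_unitary hherm (t j : Finset (Fin n)))
  rw [Fintype.card_fin, Nat.cast_pow, Nat.cast_ofNat] at htr
  rw [sykCoeff, norm_mul, norm_mul, norm_pow, norm_mul, norm_inv, norm_inv, norm_pow, norm_pow,
    Complex.norm_I, one_pow, one_mul, Complex.norm_real, Real.norm_of_nonneg (Real.sqrt_nonneg _),
    Complex.norm_ofNat]
  calc _ ≤ ((2 : ℝ) ^ (n / 2))⁻¹ * (Real.sqrt (n.choose q))⁻¹ ^ k * 2 ^ (n / 2) := by gcongr
    _ = (Real.sqrt (n.choose q))⁻¹ ^ k := by field_simp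

theorem sykCoeff_eq_zero_of_not_evenCover (hψ : IsClifford ψ) (hq : Even q) {k : ℕ}
    {t : Fin k → {A : Finset (Fin n) // A.card = q}}
    (ht : ¬ EvenCover fun j => (t j : Finset (Fin n))) : sykCoeff n q ψ t = 0 := by
  rw [sykCoeff, hψ.trace_prod_psiProd_eq_zero _ (fun j => by rw [(t j).2]; exact hq) ht, mul_zero]

end SYK

theorem stmt12_general (μ : Measure ℝ) [IsProbabilityMeasure μ]
    (hmean : ∫ x, x ∂μ = 0)
    (hmom : ∀ k : ℕ, Integrable (fun x => |x| ^ k) μ)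
    (k : ℕ) :
    ∃ C : ℝ, ∀ (n q : ℕ), 0 < n → Even n → Even q → 2 ≤ q → q < n →
      ∀ ψ : Fin n → Matrix (Fin (2 ^ (n / 2))) (Fin (2 ^ (n / 2))) ℂ,
        (∀ i, (ψ i).IsHermitian) →
        (∀ i j, ψ i * ψ j + ψ j * ψ i =
          if i = j then (2 : ℂ) • (1 : Matrix (Fin (2 ^ (n / 2))) (Fin (2 ^ (n / 2))) ℂ)
          else 0) →
      ∀ (Ω : Type) (mΩ : MeasurableSpace Ω) (P : Measure Ω), IsProbabilityMeasure P →
      ∀ J : {A : Finset (Fin n) // A.card = q} → Ω → ℝ,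
        (∀ R, Measurable (J R)) →
        (∀ R, Measure.map (J R) P = μ) →
        iIndepFun J P →
        ∫ ω, ‖((2 : ℂ) ^ (n / 2))⁻¹ * ((sykH n q ψ J ω) ^ k).trace -
              ∫ ω', ((2 : ℂ) ^ (n / 2))⁻¹ * ((sykH n q ψ J ω') ^ k).trace ∂P‖ ^ 2 ∂P ≤
          C * ((n.choose q : ℝ))⁻¹ := by
  refine ⟨varianceConst μ k, fun n q _ _ hq _ hqn ψ hherm hψ Ω _ P _ J hJm hJmap hJind => ?_⟩
  obtain ⟨A, -, hA⟩ := exists_subset_card_eq (s := (univ : Finset (Fin n))) (by simpa using hqn.le)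
  have : Nonempty {A : Finset (Fin n) // A.card = q} := ⟨⟨A, hA⟩⟩
  have hN : Fintype.card {A : Finset (Fin n) // A.card = q} = n.choose q := by
    simp [Fintype.card_finset_len]
  let G : Set (Fin k → {A : Finset (Fin n) // A.card = q}) :=
    {t | EvenCover fun j => (t j : Finset (Fin n))}
  have hG : ∀ t ∈ G, ∀ t' ∈ G, ∀ j₀, (∀ j ≠ j₀, t j = t' j) → t = t' := fun t ht t' ht' j₀ h => by
    have hval := ht.eq_of_forall_ne ht' fun j hj => congrArg Subtype.val (h j hj)
    exact funext fun j => Subtype.ext (congrFun hval j)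
  simp_rw [inv_mul_trace_sykH_pow_eq_sum]
  refine (integral_norm_sum_sub_integral_sq_le ⟨hJm, hJmap, hJind⟩ hmean hmom hG _
    (fun _ ht => sykCoeff_eq_zero_of_not_evenCover hψ hq ht)
    (norm_sykCoeff_le hψ hherm)).trans_eq ?_
  have hN0 : (0 : ℝ) < n.choose q := by exact_mod_cast Nat.choose_pos hqn.le
  rw [hN, ← pow_mul, mul_comm k, pow_mul, inv_pow, Real.sq_sqrt hN0.le, inv_pow]
  field_simp

theorem stmt12 (μ : Measure ℝ) [IsProbabilityMeasure μ]
    (hmean : ∫ x, x ∂μ = 0) (hvar : ∫ x, x ^ 2 ∂μ = 1)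
    (hmom : ∀ k : ℕ, Integrable (fun x => |x| ^ k) μ)
    (k : ℕ) (hk : 1 ≤ k) :
    ∃ C : ℝ, ∀ (n q : ℕ), 0 < n → Even n → Even q → 2 ≤ q → q < n →
      ∀ ψ : Fin n → Matrix (Fin (2 ^ (n / 2))) (Fin (2 ^ (n / 2))) ℂ,
        (∀ i, (ψ i).IsHermitian) →
        (∀ i j, ψ i * ψ j + ψ j * ψ i =
          if i = j then (2 : ℂ) • (1 : Matrix (Fin (2 ^ (n / 2))) (Fin (2 ^ (n / 2))) ℂ)
          else 0) →
      ∀ (Ω : Type) (mΩ : MeasurableSpace Ω) (P : Measure Ω), IsProbabilityMeasure P →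
      ∀ J : {A : Finset (Fin n) // A.card = q} → Ω → ℝ,
        (∀ R, Measurable (J R)) →
        (∀ R, Measure.map (J R) P = μ) →
        iIndepFun J P →
        ∫ ω, ‖((2 : ℂ) ^ (n / 2))⁻¹ * ((sykH n q ψ J ω) ^ k).trace -
              ∫ ω', ((2 : ℂ) ^ (n / 2))⁻¹ * ((sykH n q ψ J ω') ^ k).trace ∂P‖ ^ 2 ∂P ≤
          C * ((n.choose q : ℝ))⁻¹ :=
  stmt12_general μ hmean hmom k
end

section
/- Let q be an integer with 1 ≤ q ≤ n and m ≥ 1 an integer. The set B_m of m-tuples (R_1, …, R_m) of pairwise distinct q-element subsets of {1, …, n} such that Ψ_{R_1} Ψ_{R_2} ⋯ Ψ_{R_m} = I or Ψ_{R_1} Ψ_{R_2} ⋯ Ψ_{R_m} = −I has cardinality at most C(n,q)^{m−1}. -/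
/-!
Moving `ψ j` across a word in the generators costs the sign `(-1) ^ k`, where `k` counts the
letters different from `j`. A word equal to `±1` commutes with every `ψ j`, so each such `k` is
even. Modulo 2 every letter then occurs as often as the length of the word, and summing over the
`n` letters (`n` even) shows that every letter occurs an even number of times: each `j` lies in
an even number of the `R i`. Hence the last set is determined by the others (it consists of the
`j` lying in an odd number of them), which leaves at most `C(n, q) ^ (m - 1)` tuples.
-/

open Matrix BigOperators
open scoped Classical

open Finset

section Anticommuting

variable {R ι : Type*} [Ring R] [DecidableEq ι] {ψ : ι → R}

theorem mul_prod_map_eq_neg_one_pow_mul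
    (hanti : ∀ i j, i ≠ j → ψ i * ψ j = -(ψ j * ψ i)) (j : ι) (l : List ι) :
    ψ j * (l.map ψ).prod = (-1) ^ l.countP (· ≠ j) * ((l.map ψ).prod * ψ j) := by
  induction l with
  | nil => simp
  | cons x l ih =>
    have hcomm : Commute ((-1 : R) ^ l.countP (· ≠ j)) (ψ x) :=
      (Commute.neg_one_left _).pow_left _
    simp only [List.map_cons, List.prod_cons, List.countP_cons]
    by_cases hx : x = j
    · subst hx
      simp only [ne_eq, not_true_eq_false, decide_false, Bool.false_eq_true, if_false,
        add_zero] at ih hcomm ⊢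
      rw [mul_assoc, ih, ← mul_assoc, ← hcomm.eq, mul_assoc]
    · simp only [ne_eq, hx, not_false_eq_true, decide_true, if_true, pow_succ]
      rw [← mul_assoc, hanti j x (Ne.symm hx), neg_mul, mul_assoc, ih, ← mul_assoc,
        ← hcomm.eq]
      noncomm_ring

theorem even_countP_ne_of_prod_map_eq_one_or_neg_one
    (hsq : ∀ i, ψ i * ψ i = 1) (hanti : ∀ i j, i ≠ j → ψ i * ψ j = -(ψ j * ψ i))
    (hneg : (-1 : R) ≠ 1) {l : List ι} (hl : (l.map ψ).prod = 1 ∨ (l.map ψ).prod = -1)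
    (j : ι) :
    Even (l.countP (· ≠ j)) := by
  rw [← neg_one_pow_eq_one_iff_even hneg]
  have h := mul_prod_map_eq_neg_one_pow_mul hanti j l
  have hψ : ψ j = (-1) ^ l.countP (· ≠ j) * ψ j := by
    rcases hl with hl | hl <;> simpa [hl] using h
  calc (-1) ^ l.countP (· ≠ j) = (-1) ^ l.countP (· ≠ j) * ψ j * ψ j := by
        rw [mul_assoc, hsq, mul_one]
    _ = 1 := by rw [← hψ, hsq]

end Anticommuting

theorem List.even_count_of_even_countP_ne {ι : Type*} [Fintype ι] [DecidableEq ι]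
    (hι : Even (Fintype.card ι)) {l : List ι} (h : ∀ j, Even (l.countP (· ≠ j))) (j : ι) :
    Even (l.count j) := by
  have hcount : ∀ i, (l.count i : ZMod 2) = l.length := by
    intro i
    have hsplit : l.count i + l.countP (· ≠ i) = l.length := by
      rw [l.length_eq_countP_add_countP (· == i), List.count]
      simp
    rw [← hsplit, Nat.cast_add, ZMod.natCast_eq_zero_iff_even.2 (h i), add_zero]
  have hlength : (l.length : ZMod 2) = 0 := by
    have hsum : ∑ i, l.count i = l.length := by
      simpa using Multiset.sum_count_eq_card (s := univ) (m := (l : Multiset ι)) (by simp)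
    rw [← hsum, Nat.cast_sum]
    simp [hcount, ZMod.natCast_eq_zero_iff_even.2 hι]
  rw [← ZMod.natCast_eq_zero_iff_even, hcount, hlength]

theorem List.count_flatMap_ofFn_sort {ι : Type*} [LinearOrder ι] {m : ℕ}
    (R : Fin m → Finset ι) (j : ι) :
    ((List.ofFn R).flatMap (·.sort (· ≤ ·))).count j = #{i | j ∈ R i} := by
  rw [List.count_flatMap, card_filter, List.map_ofFn, List.sum_ofFn]
  simp [(sort_nodup _ _).count]

theorem prod_ofFn_psiProd {n m : ℕ} {L : Type*} [Fintype L] [DecidableEq L]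
    (ψ : Fin n → Matrix L L ℂ) (R : Fin m → Finset (Fin n)) :
    (List.ofFn fun i => PsiProd ψ (R i)).prod =
      (((List.ofFn R).flatMap (·.sort (· ≤ ·))).map ψ).prod := by
  simp [PsiProd, List.flatMap, List.map_flatten, List.prod_flatten, List.map_ofFn,
    Function.comp_def]

theorem Fin.last_eq_of_forall_even_card_filter_mem {ι : Type*} [Fintype ι] [DecidableEq ι]
    {k : ℕ} {R : Fin (k + 1) → Finset ι} (h : ∀ j, Even #{i | j ∈ R i}) :
    R (Fin.last k) = ({j | Odd #{i | j ∈ Fin.init R i}} : Finset ι) := by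
  ext j
  have hsplit : #{i | j ∈ R i} =
      #{i | j ∈ Fin.init R i} + if j ∈ R (Fin.last k) then 1 else 0 := by
    rw [card_filter, card_filter, Fin.sum_univ_castSucc]
    rfl
  have hj := hsplit ▸ h j
  simp only [mem_filter, mem_univ, true_and]
  by_cases hmem : j ∈ R (Fin.last k)
  · simpa [hmem, Nat.even_add_one] using hj
  · simpa [hmem] using hj

theorem card_le_card_pow_of_last_eq {α : Type*} {k : ℕ} (S : Finset (Fin (k + 1) → α))
    (s : Finset α) (f : (Fin k → α) → α) (hs : ∀ R ∈ S, ∀ i, R i ∈ s)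
    (hf : ∀ R ∈ S, R (Fin.last k) = f (Fin.init R)) : #S ≤ #s ^ k := by
  calc #S ≤ #(Fintype.piFinset fun _ : Fin k => s) := by
        refine card_le_card_of_injOn Fin.init (fun R hR => ?_) fun R hR R' hR' hinit => ?_
        · simpa [Fin.init] using fun i : Fin k => hs R hR i.castSucc
        · rw [← Fin.snoc_init_self R, ← Fin.snoc_init_self R', hf R hR, hf R' hR']
          simp only [hinit]
    _ = #s ^ k := by simp

theorem even_card_filter_mem_of_prod_psiProd_eq_one_or_neg_one {n m : ℕ} {L : Type*}
    [Fintype L] [DecidableEq L] [Nonempty L] (hn : Even n) {ψ : Fin n → Matrix L L ℂ}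
    (hsq : ∀ i, ψ i * ψ i = 1) (hanti : ∀ i j, i ≠ j → ψ i * ψ j = -(ψ j * ψ i))
    {R : Fin m → Finset (Fin n)}
    (hR : (List.ofFn fun i => PsiProd ψ (R i)).prod = 1 ∨
      (List.ofFn fun i => PsiProd ψ (R i)).prod = -1) (j : Fin n) :
    Even #{i | j ∈ R i} := by
  have hsign : (-1 : Matrix L L ℂ) ≠ 1 := fun h => by
    obtain ⟨l⟩ := ‹Nonempty L›
    have hll := congrFun (congrFun h l) l
    norm_num at hll
  rw [prod_ofFn_psiProd] at hR
  rw [← List.count_flatMap_ofFn_sort]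
  exact List.even_count_of_even_countP_ne (by simpa using hn)
    (even_countP_ne_of_prod_map_eq_one_or_neg_one hsq hanti hsign hR) j

theorem stmt13_general (n : ℕ) (hn : Even n)
    (ψ : Fin n → Matrix (Fin (2 ^ (n / 2))) (Fin (2 ^ (n / 2))) ℂ)
    (hclif : ∀ i j, ψ i * ψ j + ψ j * ψ i =
      if i = j then (2 : ℂ) • (1 : Matrix (Fin (2 ^ (n / 2))) (Fin (2 ^ (n / 2))) ℂ) else 0)
    (q : ℕ) (m : ℕ) :
    (Finset.univ.filter fun R : Fin m → Finset (Fin n) =>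
        (∀ i, (R i).card = q) ∧ Function.Injective R ∧
          ((List.ofFn fun i => PsiProd ψ (R i)).prod = 1 ∨
            (List.ofFn fun i => PsiProd ψ (R i)).prod = -1)).card ≤
      (n.choose q) ^ (m - 1) := by
  have hsq : ∀ i, ψ i * ψ i = 1 := fun i => by
    have h := hclif i i
    rw [if_pos rfl, ← two_smul ℂ] at h
    exact smul_right_injective _ two_ne_zero h
  have hanti : ∀ i j, i ≠ j → ψ i * ψ j = -(ψ j * ψ i) := fun i j hij =>
    eq_neg_of_add_eq_zero_left (by simpa [hij] using hclif i j)
  cases m with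
  | zero => exact (card_le_univ _).trans_eq (by simp)
  | succ k =>
    refine (card_le_card_pow_of_last_eq _ (powersetCard q univ)
      (fun g => ({j | Odd #{i | j ∈ g i}} : Finset (Fin n)))
      (fun R hR i => ?_) (fun R hR => ?_)).trans_eq (by simp)
    · exact mem_powersetCard_univ.2 ((mem_filter.1 hR).2.1 i)
    · exact Fin.last_eq_of_forall_even_card_filter_mem
        (even_card_filter_mem_of_prod_psiProd_eq_one_or_neg_one hn hsq hanti
          (mem_filter.1 hR).2.2.2)

theorem stmt13 (n : ℕ) (hn0 : 0 < n) (hn : Even n)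
    (ψ : Fin n → Matrix (Fin (2 ^ (n / 2))) (Fin (2 ^ (n / 2))) ℂ)
    (hherm : ∀ i, (ψ i).IsHermitian)
    (hclif : ∀ i j, ψ i * ψ j + ψ j * ψ i =
      if i = j then (2 : ℂ) • (1 : Matrix (Fin (2 ^ (n / 2))) (Fin (2 ^ (n / 2))) ℂ) else 0)
    (q : ℕ) (hq : 1 ≤ q) (hqn : q ≤ n) (m : ℕ) (hm : 1 ≤ m) :
    (Finset.univ.filter fun R : Fin m → Finset (Fin n) =>
        (∀ i, (R i).card = q) ∧ Function.Injective R ∧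
          ((List.ofFn fun i => PsiProd ψ (R i)).prod = 1 ∨
            (List.ofFn fun i => PsiProd ψ (R i)).prod = -1)).card ≤
      (n.choose q) ^ (m - 1) :=
  stmt13_general n hn ψ hclif q m
end
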